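/- arXiv:2510.11766 — 8 statements merged into one kernel-verified Lean document; each statement's English description precedes it below -/
import Mathlib

section
/- Let α, E, λ ∈ ℂ with α ≠ 0, and define f(z) = α z · (1 + (λ^2 - 2 E z^2)/(α^2 z^4))^(1/2), where w ↦ w^(1/2) denotes the principal complex power. Then there exists R₀ > 0 such that for every R > R₀, f is continuous on the circle |z| = R, and the counterclockwise circle integral of f over |z| = R equals -2πi E/α. -/
/-! For `|z| ≥ R₀` the correction `g = (λ² - 2Ez²)/(α²z⁴)` has modulus at most `1/2`, so the
principal square root of `1 + g` is holomorphic there and equals `1 + g/2 + O(|g|²)`. Hence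
`f(z) = αz - (E/α) z⁻¹ + O(|z|⁻³)`. The remainder is holomorphic outside the disk, so its circle
integrals do not depend on the radius, while they are `O(1/r)`; they therefore vanish, and only the
`z⁻¹` term contributes, with `2πi · (-E/α)`. -/

open Complex Metric Filter Topology Real

section ExteriorCircleIntegral

variable {F : Type*} [NormedAddCommGroup F] [NormedSpace ℂ F]

theorem circleIntegral_eq_zero_of_norm_le_div_sq {g : ℂ → F} {c : ℂ} {R C : ℝ} (hR : 0 < R)
    (hd : ∀ z, R ≤ ‖z - c‖ → DifferentiableAt ℂ g z)
    (hg : ∀ z, R ≤ ‖z - c‖ → ‖g z‖ ≤ C / ‖z - c‖ ^ 2) :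
    ∮ z in C(c, R), g z = 0 := by
  have hconst : ∀ r, R ≤ r → ∮ z in C(c, r), g z = ∮ z in C(c, R), g z := fun r hr =>
    circleIntegral_eq_of_differentiable_on_annulus_off_countable hR hr Set.countable_empty
      (fun z hz => (hd z (by simpa [dist_eq_norm] using hz.2)).continuousAt.continuousWithinAt)
      (fun z hz => hd z (le_of_lt <| by simpa [dist_eq_norm] using hz.1.2))
  have hbound : ∀ r, R ≤ r → ‖∮ z in C(c, R), g z‖ ≤ 2 * π * C / r := by
    intro r hr
    have hr0 : 0 < r := hR.trans_le hr
    rw [← hconst r hr]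
    calc _ ≤ 2 * π * r * (C / r ^ 2) :=
          circleIntegral.norm_integral_le_of_norm_le_const hr0.le fun z hz => by
            rw [mem_sphere_iff_norm] at hz
            simpa [hz] using hg z (hr.trans hz.ge)
      _ = 2 * π * C / r := by field_simp
  have hlim : Tendsto (fun r => 2 * π * C / r) atTop (𝓝 0) :=
    tendsto_const_nhds.div_atTop tendsto_id
  exact norm_le_zero_iff.mp (ge_of_tendsto hlim ((eventually_ge_atTop R).mono hbound))

theorem circleIntegral_eq_of_norm_sub_le_div_sq {f p : ℂ → F} {c : ℂ} {R C : ℝ} (hR : 0 < R)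
    (hf : ∀ z, R ≤ ‖z - c‖ → DifferentiableAt ℂ f z)
    (hp : ∀ z, R ≤ ‖z - c‖ → DifferentiableAt ℂ p z)
    (hfp : ∀ z, R ≤ ‖z - c‖ → ‖f z - p z‖ ≤ C / ‖z - c‖ ^ 2) :
    ∮ z in C(c, R), f z = ∮ z in C(c, R), p z := by
  have hint : ∀ {h : ℂ → F}, (∀ z, R ≤ ‖z - c‖ → DifferentiableAt ℂ h z) →
      CircleIntegrable h c R := fun hh =>
    ContinuousOn.circleIntegrable hR.le fun z hz =>
      (hh z (mem_sphere_iff_norm.mp hz).ge).continuousAt.continuousWithinAt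
  rw [← sub_eq_zero, ← circleIntegral.integral_sub (hint hf) (hint hp)]
  exact circleIntegral_eq_zero_of_norm_le_div_sq hR (fun z hz => (hf z hz).sub (hp z hz)) hfp

end ExteriorCircleIntegral

theorem circleIntegral_mul_sub_add_mul_inv_sub (a b c : ℂ) {R : ℝ} (hR : 0 < R) :
    ∮ z in C(c, R), (a * (z - c) + b * (z - c)⁻¹) = b * (2 * π * I) := by
  have hinv : ContinuousOn (fun z => b * (z - c)⁻¹) (sphere c R) := fun z hz =>
    (continuousAt_const.mul ((continuousAt_id.sub continuousAt_const).inv₀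
      (sub_ne_zero.mpr (ne_of_mem_sphere hz hR.ne')))).continuousWithinAt
  have hlin : CircleIntegrable (fun z => a * (z - c)) c R :=
    (continuous_const.mul (continuous_id.sub continuous_const)).continuousOn.circleIntegrable'
  rw [circleIntegral.integral_add hlin (hinv.circleIntegrable hR.le),
    circleIntegral.integral_const_mul, circleIntegral.integral_const_mul,
    circleIntegral.integral_sub_inv_of_mem_ball (mem_ball_self hR)]
  have hpow := circleIntegral.integral_sub_zpow_of_ne (n := 1) (by decide) c c R
  simp only [zpow_one] at hpow
  rw [hpow, mul_zero, zero_add]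

theorem norm_one_add_cpow_half_sub_le {w : ℂ} (hw : ‖w‖ ≤ 1 / 2) :
    ‖(1 + w) ^ (1 / 2 : ℂ) - (1 + w / 2)‖ ≤ ‖w‖ ^ 2 := by
  have hs_sq : ((1 + w) ^ (1 / 2 : ℂ)) ^ 2 = 1 + w := by rw [one_div]; exact cpow_ofNat_inv_pow _ 2
  have hs_re : 0 ≤ ((1 + w) ^ (1 / 2 : ℂ)).re := by
    rw [one_div, cpow_inv_two_re]; exact Real.sqrt_nonneg _
  set s := (1 + w) ^ (1 / 2 : ℂ)
  have hw_re : -(1 / 2) ≤ w.re := by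
    linarith [neg_abs_le w.re, abs_re_le_norm w]
  -- rationalize: `(s - (1 + w/2)) (s + (1 + w/2)) = -w²/4`, and the second factor is not small
  have hsum : 3 / 4 ≤ ‖s + (1 + w / 2)‖ := by
    refine le_trans ?_ (re_le_norm _)
    simp only [add_re, one_re, div_ofNat_re]
    linarith
  have hprod : ‖s - (1 + w / 2)‖ * ‖s + (1 + w / 2)‖ = ‖w‖ ^ 2 / 4 := by
    rw [← norm_mul, show (s - (1 + w / 2)) * (s + (1 + w / 2)) = -(w ^ 2 / 4) by
      linear_combination hs_sq]
    simp [norm_pow]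
  nlinarith [norm_nonneg (s - (1 + w / 2)), norm_nonneg w]

/-- `α² z² + λ²/z² - 2E = α² z² (1 + oscillatorCorrection α E lam z)`. -/
noncomputable def oscillatorCorrection (α E lam z : ℂ) : ℂ :=
  (lam ^ 2 - 2 * E * z ^ 2) / (α ^ 2 * z ^ 4)

section Oscillator

variable (α E lam : ℂ)

theorem norm_oscillatorCorrection_le {z : ℂ} (hz : 1 ≤ ‖z‖) :
    ‖oscillatorCorrection α E lam z‖ ≤ (‖lam‖ ^ 2 + 2 * ‖E‖) / ‖α‖ ^ 2 / ‖z‖ ^ 2 := by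
  have hnum : ‖lam ^ 2 - 2 * E * z ^ 2‖ ≤ (‖lam‖ ^ 2 + 2 * ‖E‖) * ‖z‖ ^ 2 :=
    calc ‖lam ^ 2 - 2 * E * z ^ 2‖ ≤ ‖lam‖ ^ 2 + 2 * ‖E‖ * ‖z‖ ^ 2 :=
          (norm_sub_le _ _).trans_eq (by rw [norm_pow, norm_mul, norm_mul, norm_pow]; norm_num)
      _ ≤ (‖lam‖ ^ 2 + 2 * ‖E‖) * ‖z‖ ^ 2 := by nlinarith [one_le_pow₀ (n := 2) hz]
  have hz0 : ‖z‖ ≠ 0 := (one_pos.trans_le hz).ne'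
  calc ‖oscillatorCorrection α E lam z‖ = ‖lam ^ 2 - 2 * E * z ^ 2‖ / (‖α‖ ^ 2 * ‖z‖ ^ 4) := by
        rw [oscillatorCorrection, norm_div, norm_mul, norm_pow, norm_pow]
    _ ≤ (‖lam‖ ^ 2 + 2 * ‖E‖) * ‖z‖ ^ 2 / (‖α‖ ^ 2 * ‖z‖ ^ 4) := by gcongr
    _ = _ := by field_simp

theorem differentiableAt_oscillator (hα : α ≠ 0) {z : ℂ} (hz : z ≠ 0)
    (hsmall : ‖oscillatorCorrection α E lam z‖ < 1) :
    DifferentiableAt ℂ (fun z => α * z * (1 + oscillatorCorrection α E lam z) ^ (1 / 2 : ℂ)) z := by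
  have hg : DifferentiableAt ℂ (oscillatorCorrection α E lam) z :=
    .div (by fun_prop) (by fun_prop) (by positivity)
  exact (differentiableAt_id.const_mul α).mul
    ((hg.const_add 1).cpow (differentiableAt_const _) (mem_slitPlane_of_norm_lt_one hsmall))

theorem oscillator_sub_principalPart (hα : α ≠ 0) {z : ℂ} (hz : z ≠ 0) :
    α * z * (1 + oscillatorCorrection α E lam z) ^ (1 / 2 : ℂ) - (α * z + -E / α * z⁻¹) =
      α * z * ((1 + oscillatorCorrection α E lam z) ^ (1 / 2 : ℂ) -
        (1 + oscillatorCorrection α E lam z / 2)) + lam ^ 2 / (2 * α) / z ^ 3 := by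
  unfold oscillatorCorrection
  field_simp
  ring

theorem norm_oscillator_sub_principalPart_le (hα : α ≠ 0) {z : ℂ} (hz : 1 ≤ ‖z‖)
    (hsmall : ‖oscillatorCorrection α E lam z‖ ≤ 1 / 2) :
    ‖α * z * (1 + oscillatorCorrection α E lam z) ^ (1 / 2 : ℂ) - (α * z + -E / α * z⁻¹)‖ ≤
      (‖α‖ * ((‖lam‖ ^ 2 + 2 * ‖E‖) / ‖α‖ ^ 2) ^ 2 + ‖lam‖ ^ 2 / (2 * ‖α‖)) / ‖z‖ ^ 2 := by
  have hz0 : z ≠ 0 := norm_pos_iff.mp (one_pos.trans_le hz)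
  set K := (‖lam‖ ^ 2 + 2 * ‖E‖) / ‖α‖ ^ 2
  have hg := norm_oscillatorCorrection_le α E lam hz
  rw [oscillator_sub_principalPart α E lam hα hz0]
  calc _ ≤ ‖α‖ * ‖z‖ * ‖oscillatorCorrection α E lam z‖ ^ 2 + ‖lam‖ ^ 2 / (2 * ‖α‖) / ‖z‖ ^ 3 := by
        refine (norm_add_le _ _).trans (add_le_add ?_ (by simp [norm_pow]))
        rw [norm_mul, norm_mul]
        gcongr
        exact norm_one_add_cpow_half_sub_le hsmall
    _ ≤ ‖α‖ * ‖z‖ * (K / ‖z‖ ^ 2) ^ 2 + ‖lam‖ ^ 2 / (2 * ‖α‖) / ‖z‖ ^ 3 := by gcongr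
    _ = (‖α‖ * K ^ 2 + ‖lam‖ ^ 2 / (2 * ‖α‖)) / ‖z‖ ^ 3 := by field_simp
    _ ≤ _ := by gcongr; norm_num

end Oscillator

/-- Infinity-circle contribution to the closed Voros period for the (variationally
modified) 3D harmonic oscillator: for `α ≠ 0`, the branch at infinity
`f(z) = α z (1 + (λ² - 2Ez²)/(α² z⁴))^{1/2}` of the leading WKB momentum
`√(α² r² + λ²/r² - 2E)` is continuous on all sufficiently large circles `|z| = R`,
and its counterclockwise circle integral equals `-2πiE/α`. -/
theorem oscillator_infinity_circle (α E lam : ℂ) (hα : α ≠ 0) :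
    ∃ R₀ : ℝ, 0 < R₀ ∧ ∀ R : ℝ, R₀ < R →
      ContinuousOn
        (fun z : ℂ => α * z * (1 + (lam ^ 2 - 2 * E * z ^ 2) / (α ^ 2 * z ^ 4)) ^ (1 / 2 : ℂ))
        (Metric.sphere (0 : ℂ) R) ∧
      circleIntegral
        (fun z : ℂ => α * z * (1 + (lam ^ 2 - 2 * E * z ^ 2) / (α ^ 2 * z ^ 4)) ^ (1 / 2 : ℂ))
        0 R = -2 * Real.pi * Complex.I * E / α := by
  set K := (‖lam‖ ^ 2 + 2 * ‖E‖) / ‖α‖ ^ 2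
  refine ⟨max 1 (2 * K), by positivity, fun R hR => ?_⟩
  have hR1 : 1 < R := (le_max_left _ _).trans_lt hR
  have hRK : 2 * K < R := (le_max_right _ _).trans_lt hR
  have hfar : ∀ z : ℂ, R ≤ ‖z - 0‖ →
      z ≠ 0 ∧ 1 ≤ ‖z‖ ∧ ‖oscillatorCorrection α E lam z‖ ≤ 1 / 2 := by
    intro z hz
    rw [sub_zero] at hz
    have hz1 : 1 ≤ ‖z‖ := hR1.le.trans hz
    refine ⟨norm_pos_iff.mp (one_pos.trans_le hz1), hz1,
      (norm_oscillatorCorrection_le α E lam hz1).trans ?_⟩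
    rw [div_le_iff₀ (by positivity)]
    nlinarith
  have hdiff : ∀ z : ℂ, R ≤ ‖z - 0‖ → DifferentiableAt ℂ
      (fun z => α * z * (1 + oscillatorCorrection α E lam z) ^ (1 / 2 : ℂ)) z := fun z hz =>
    differentiableAt_oscillator α E lam hα (hfar z hz).1 ((hfar z hz).2.2.trans_lt (by norm_num))
  refine ⟨fun z hz =>
    (hdiff z (by simp [mem_sphere_zero_iff_norm.mp hz])).continuousAt.continuousWithinAt, ?_⟩
  have hR0 : 0 < R := one_pos.trans hR1
  calc _ = ∮ z in C(0, R), (α * z + -E / α * z⁻¹) :=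
        circleIntegral_eq_of_norm_sub_le_div_sq hR0 hdiff
          (fun z hz => by fun_prop (disch := exact (hfar z hz).1))
          (fun z hz => by
            simpa using
              norm_oscillator_sub_principalPart_le α E lam hα (hfar z hz).2.1 (hfar z hz).2.2)
    _ = -E / α * (2 * π * I) := by
        simpa using circleIntegral_mul_sub_add_mul_inv_sub α (-E / α) 0 hR0
    _ = _ := by ring
end

section
/- Let α, E, λ ∈ ℂ with λ ≠ 0, and define g(z) = (λ/z) · (1 + (α^2 z^4 - 2 E z^2)/λ^2)^(1/2), where w ↦ w^(1/2) denotes the principal complex power. Then there exists ε₀ > 0 such that for every ε with 0 < ε < ε₀, g is continuous on the circle |z| = ε, and the counterclockwise circle integral of g over |z| = ε equals 2πi λ. -/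
open Complex Metric Filter Topology Real

/- Near the origin `1 + (α²z⁴ - 2Ez²)/λ²` stays close to `1`, inside the slit plane where the
principal square root is holomorphic. So `g z = z⁻¹ • f z` with `f = λ (1 + …)^{1/2}` holomorphic
on a disc around `0`, and Cauchy's integral formula gives `∮ g = 2πi f 0 = 2πiλ` on every circle
inside that disc. -/

theorem eventually_differentiableAt_cpow_const {p : ℂ → ℂ} {c w : ℂ}
    (hp : ∀ᶠ z in 𝓝 c, DifferentiableAt ℂ p z) (hc : p c ∈ slitPlane) :
    ∀ᶠ z in 𝓝 c, DifferentiableAt ℂ (fun z => p z ^ w) z := by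
  have hslit : ∀ᶠ z in 𝓝 c, p z ∈ slitPlane :=
    hp.self_of_nhds.continuousAt.preimage_mem_nhds (isOpen_slitPlane.mem_nhds hc)
  filter_upwards [hp, hslit] with z hpz hz
  exact hpz.cpow (differentiableAt_const w) hz

section CauchyFormula

variable {F : Type*} [NormedAddCommGroup F] [NormedSpace ℂ F] [CompleteSpace F]

theorem exists_pos_circleIntegral_sub_inv_smul {f : ℂ → F} {c : ℂ}
    (hf : ∀ᶠ z in 𝓝 c, DifferentiableAt ℂ f z) :
    ∃ ε₀ : ℝ, 0 < ε₀ ∧ ∀ ε : ℝ, 0 < ε → ε < ε₀ →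
      ContinuousOn (fun z => (z - c)⁻¹ • f z) (sphere c ε) ∧
      (∮ z in C(c, ε), (z - c)⁻¹ • f z) = (2 * π * I : ℂ) • f c := by
  obtain ⟨ε₀, hε₀, hball⟩ := Metric.eventually_nhds_iff_ball.mp hf
  refine ⟨ε₀, hε₀, fun ε hε hεε₀ => ?_⟩
  have hdiff : DifferentiableOn ℂ f (closedBall c ε) := fun z hz =>
    (hball z (closedBall_subset_ball hεε₀ hz)).differentiableWithinAt
  constructor
  · refine ContinuousOn.smul (fun z hz => ?_) (hdiff.continuousOn.mono sphere_subset_closedBall)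
    have hzc : z - c ≠ 0 := sub_ne_zero.mpr (ne_of_mem_sphere hz hε.ne')
    exact ((continuousAt_id.sub continuousAt_const).inv₀ hzc).continuousWithinAt
  · have hcl : DiffContOnCl ℂ f (ball c ε) := by
      apply DifferentiableOn.diffContOnCl
      rwa [closure_ball c hε.ne']
    exact hcl.circleIntegral_sub_inv_smul (mem_ball_self hε)

end CauchyFormula

theorem oscillator_origin_circle_general (α E lam : ℂ) :
    ∃ ε₀ : ℝ, 0 < ε₀ ∧ ∀ ε : ℝ, 0 < ε → ε < ε₀ →
      ContinuousOn
        (fun z : ℂ => lam / z * (1 + (α ^ 2 * z ^ 4 - 2 * E * z ^ 2) / lam ^ 2) ^ (1 / 2 : ℂ))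
        (Metric.sphere (0 : ℂ) ε) ∧
      circleIntegral
        (fun z : ℂ => lam / z * (1 + (α ^ 2 * z ^ 4 - 2 * E * z ^ 2) / lam ^ 2) ^ (1 / 2 : ℂ))
        0 ε = 2 * Real.pi * Complex.I * lam := by
  set p : ℂ → ℂ := fun z => 1 + (α ^ 2 * z ^ 4 - 2 * E * z ^ 2) / lam ^ 2
  have hp : ∀ᶠ z in 𝓝 0, DifferentiableAt ℂ p z := Eventually.of_forall fun z => by fun_prop
  have hp0 : p 0 ∈ slitPlane := by simp [p]
  have hf : ∀ᶠ z in 𝓝 0, DifferentiableAt ℂ (fun z => lam * p z ^ (1 / 2 : ℂ)) z :=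
    (eventually_differentiableAt_cpow_const hp hp0).mono fun z hz => hz.const_mul lam
  have hg : (fun z => lam / z * p z ^ (1 / 2 : ℂ)) =
      fun z => (z - 0)⁻¹ • (lam * p z ^ (1 / 2 : ℂ)) := by
    funext z
    rw [sub_zero, smul_eq_mul, div_eq_inv_mul, mul_assoc, mul_left_comm]
  obtain ⟨ε₀, hε₀, hcauchy⟩ := exists_pos_circleIntegral_sub_inv_smul hf
  refine ⟨ε₀, hε₀, fun ε hε hεε₀ => ?_⟩
  rw [hg]
  refine (hcauchy ε hε hεε₀).imp_right fun h => ?_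
  rw [h]
  simp [p]

/-- Origin-circle contribution (small-circle monodromy of the regular singular point)
for the (variationally modified) 3D harmonic oscillator: for `λ ≠ 0`, the branch near
the origin `g(z) = (λ/z)(1 + (α² z⁴ - 2Ez²)/λ²)^{1/2}` of the leading WKB momentum
`√(α² r² + λ²/r² - 2E)` is continuous on all sufficiently small circles `|z| = ε`,
and its counterclockwise circle integral equals `2πiλ`. -/
theorem oscillator_origin_circle (α E lam : ℂ) (hlam : lam ≠ 0) :
    ∃ ε₀ : ℝ, 0 < ε₀ ∧ ∀ ε : ℝ, 0 < ε → ε < ε₀ →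
      ContinuousOn
        (fun z : ℂ => lam / z * (1 + (α ^ 2 * z ^ 4 - 2 * E * z ^ 2) / lam ^ 2) ^ (1 / 2 : ℂ))
        (Metric.sphere (0 : ℂ) ε) ∧
      circleIntegral
        (fun z : ℂ => lam / z * (1 + (α ^ 2 * z ^ 4 - 2 * E * z ^ 2) / lam ^ 2) ^ (1 / 2 : ℂ))
        0 ε = 2 * Real.pi * Complex.I * lam :=
  oscillator_origin_circle_general α E lam
end

section
/- Let E, e ∈ ℂ with E ≠ 0, and define f(z) = (2E)^(1/2) · (1 + e^2/(E z))^(1/2), where w ↦ w^(1/2) denotes the principal complex power. Then there exists R₀ > 0 such that for every R > R₀, f is continuous on the circle |z| = R, and the counterclockwise circle integral of f over |z| = R equals 2πi e^2 / (2E)^(1/2). -/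
open Complex Metric Real

lemma re_half_pow_nonneg (w : ℂ) : 0 ≤ (w ^ (1/2 : ℂ)).re := by
  rcases eq_or_ne w 0 with rfl | hw
  · rw [Complex.zero_cpow (by norm_num)]; simp
  · rw [Complex.cpow_def_of_ne_zero hw, Complex.exp_re]
    apply mul_nonneg (Real.exp_nonneg _)
    have h1 := Complex.neg_pi_lt_arg w
    have h2 := Complex.arg_le_pi w
    have him : (Complex.log w * (1/2 : ℂ)).im = w.arg / 2 := by
      simp [Complex.mul_im, Complex.log_im]
      ring
    rw [him]
    have hπ := Real.pi_pos
    exact Real.cos_nonneg_of_mem_Icc ⟨by linarith, by linarith⟩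

lemma sq_half_pow (w : ℂ) : (w ^ (1/2 : ℂ)) ^ 2 = w := by
  have h : ((2:ℕ):ℂ)⁻¹ = (1/2 : ℂ) := by norm_num
  rw [← h]
  exact Complex.cpow_nat_inv_pow w (n := 2) two_ne_zero

lemma one_add_half_pow_ne (w : ℂ) : (1 : ℂ) + w ^ (1/2 : ℂ) ≠ 0 := by
  intro h
  have h1 := re_half_pow_nonneg w
  have h2 : ((1 : ℂ) + w ^ (1/2 : ℂ)).re = 1 + (w ^ (1/2 : ℂ)).re := by simp
  rw [h] at h2
  simp at h2
  linarith

lemma sqrt_expand (u : ℂ) :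
    (1 + u) ^ (1/2 : ℂ) - 1 - u / 2 = -(u ^ 2) / (2 * (1 + (1 + u) ^ (1/2 : ℂ)) ^ 2) := by
  set h := (1 + u) ^ (1/2 : ℂ) with hh
  have h2 : h ^ 2 = 1 + u := sq_half_pow _
  have hne : (1 : ℂ) + h ≠ 0 := one_add_half_pow_ne _
  have hden : (2 : ℂ) * (1 + h) ^ 2 ≠ 0 := mul_ne_zero two_ne_zero (pow_ne_zero _ hne)
  rw [eq_div_iff hden]
  linear_combination (2 * h + 2 - u) * h2

lemma sqrt_bound (u : ℂ) :
    ‖(1 + u) ^ (1/2 : ℂ) - 1 - u / 2‖ ≤ ‖u‖ ^ 2 / 2 := by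
  rw [sqrt_expand]
  have hre : (1 : ℝ) ≤ ((1 : ℂ) + (1 + u) ^ (1/2 : ℂ)).re := by
    have := re_half_pow_nonneg (1 + u)
    simp [Complex.add_re]
    linarith
  have habs : (1 : ℝ) ≤ ‖(1 : ℂ) + (1 + u) ^ (1/2 : ℂ)‖ :=
    le_trans hre (Complex.re_le_norm _)
  rw [norm_div, norm_neg, norm_pow, norm_mul, norm_pow]
  have h2 : ‖(2 : ℂ)‖ = 2 := by norm_num
  rw [h2]
  have hpos : (0 : ℝ) < 2 * ‖(1 : ℂ) + (1 + u) ^ (1/2 : ℂ)‖ ^ 2 := by nlinarith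
  rw [div_le_div_iff₀ hpos (by norm_num)]
  have h1 : (1:ℝ) ≤ ‖(1 : ℂ) + (1 + u) ^ (1/2 : ℂ)‖ ^ 2 := by nlinarith
  nlinarith [sq_nonneg ‖u‖, mul_le_mul_of_nonneg_left h1 (sq_nonneg ‖u‖)]

/-- Infinity-circle contribution to the leading closed Voros period for the 3D Coulomb
potential `V(r) = -e²/r`: for `E ≠ 0`, the branch at infinity
`f(z) = (2E)^{1/2} (1 + e²/(Ez))^{1/2}` of the leading WKB momentum `√(2E + 2e²/r)` is
continuous on all sufficiently large circles `|z| = R`, and its counterclockwise circle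
integral equals `2πi e²/(2E)^{1/2}`. -/
theorem coulomb_infinity_circle (E e : ℂ) (hE : E ≠ 0) :
    ∃ R₀ : ℝ, 0 < R₀ ∧ ∀ R : ℝ, R₀ < R →
      ContinuousOn
        (fun z : ℂ => (2 * E) ^ (1 / 2 : ℂ) * (1 + e ^ 2 / (E * z)) ^ (1 / 2 : ℂ))
        (Metric.sphere (0 : ℂ) R) ∧
      circleIntegral
        (fun z : ℂ => (2 * E) ^ (1 / 2 : ℂ) * (1 + e ^ 2 / (E * z)) ^ (1 / 2 : ℂ))
        0 R = 2 * Real.pi * Complex.I * e ^ 2 / (2 * E) ^ (1 / 2 : ℂ) := by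
  set c := (2 * E) ^ (1 / 2 : ℂ) with hcdef
  set k := e ^ 2 / E with hkdef
  have hc2 : c ^ 2 = 2 * E := sq_half_pow _
  have hcne : c ≠ 0 := by
    intro h; rw [h] at hc2; apply hE
    have : (2 : ℂ) * E = 0 := by rw [← hc2]; ring
    simpa using this
  refine ⟨‖k‖ + 1, by positivity, fun R hR => ?_⟩
  have hR0 : (0 : ℝ) < R := lt_of_le_of_lt (by positivity) hR
  -- rewrite e^2/(E z) = k / z for z ≠ 0
  have hkz : ∀ z : ℂ, z ≠ 0 → e ^ 2 / (E * z) = k / z := by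
    intro z hz; rw [hkdef, div_div]
  set F : ℂ → ℂ := fun z => c * (1 + k / z) ^ (1 / 2 : ℂ) with hF
  set G : ℂ → ℂ := fun z => c * ((1 + k / z) ^ (1 / 2 : ℂ) - 1 - (k / z) / 2) with hG
  set H : ℂ → ℂ := fun z => c + c * k / 2 * z⁻¹ with hH
  -- basic facts about points with large norm
  have hbig : ∀ z : ℂ, ‖k‖ + 1 ≤ ‖z‖ → z ≠ 0 ∧ ‖k / z‖ < 1 ∧ (1 + k / z) ∈ Complex.slitPlane := by
    intro z hz
    have hz0 : z ≠ 0 := by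
      intro h; subst h; rw [norm_zero] at hz; linarith [norm_nonneg k]
    have hzpos : (0 : ℝ) < ‖z‖ := norm_pos_iff.2 hz0
    have hlt : ‖k / z‖ < 1 := by
      rw [norm_div, div_lt_one hzpos]; linarith
    refine ⟨hz0, hlt, ?_⟩
    rw [Complex.mem_slitPlane_iff]
    left
    have h1 : |(k / z).re| ≤ ‖k / z‖ := Complex.abs_re_le_norm _
    have : (1 + k / z).re = 1 + (k / z).re := by simp
    rw [this]
    have := abs_le.1 h1
    linarith
  have hdiffF : ∀ z : ℂ, ‖k‖ + 1 ≤ ‖z‖ → DifferentiableAt ℂ F z := by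
    intro z hz
    obtain ⟨hz0, _, hslit⟩ := hbig z hz
    have hb : DifferentiableAt ℂ (fun z : ℂ => 1 + k / z) z :=
      (differentiableAt_const _).add ((differentiableAt_const _).div differentiableAt_id hz0)
    exact (differentiableAt_const c).mul (hb.cpow (differentiableAt_const _) hslit)
  have hdiffG : ∀ z : ℂ, ‖k‖ + 1 ≤ ‖z‖ → DifferentiableAt ℂ G z := by
    intro z hz
    obtain ⟨hz0, _, hslit⟩ := hbig z hz
    have hb : DifferentiableAt ℂ (fun z : ℂ => 1 + k / z) z :=
      (differentiableAt_const _).add ((differentiableAt_const _).div differentiableAt_id hz0)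
    have hd : DifferentiableAt ℂ (fun z : ℂ => k / z) z :=
      (differentiableAt_const _).div differentiableAt_id hz0
    exact (differentiableAt_const c).mul
      (((hb.cpow (differentiableAt_const _) hslit).sub (differentiableAt_const _)).sub
        (hd.div_const _))
  have hsphere_big : ∀ z : ℂ, z ∈ sphere (0 : ℂ) R → ‖k‖ + 1 ≤ ‖z‖ := by
    intro z hz
    rw [mem_sphere_zero_iff_norm] at hz
    rw [hz]; linarith
  -- continuity on the sphere
  have hcontF : ContinuousOn F (sphere (0 : ℂ) R) := fun z hz =>
    (hdiffF z (hsphere_big z hz)).continuousAt.continuousWithinAt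
  have heq : Set.EqOn (fun z : ℂ => c * (1 + e ^ 2 / (E * z)) ^ (1 / 2 : ℂ)) F
      (sphere (0 : ℂ) R) := by
    intro z hz
    have hz0 : z ≠ 0 := (hbig z (hsphere_big z hz)).1
    simp only [hF, hkz z hz0]
  have hcont : ContinuousOn (fun z : ℂ => c * (1 + e ^ 2 / (E * z)) ^ (1 / 2 : ℂ))
      (sphere (0 : ℂ) R) := hcontF.congr heq
  refine ⟨hcont, ?_⟩
  -- the integral of G vanishes
  have hGbound : ∀ S : ℝ, R ≤ S → ∀ z ∈ sphere (0 : ℂ) S, ‖G z‖ ≤ ‖c‖ * ‖k‖ ^ 2 / 2 / S ^ 2 := by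
    intro S hS z hz
    rw [mem_sphere_zero_iff_norm] at hz
    have hSpos : (0 : ℝ) < S := lt_of_lt_of_le hR0 hS
    have hz0 : z ≠ 0 := by intro h; rw [h] at hz; simp at hz; linarith
    have hb := sqrt_bound (k / z)
    have hnorm : ‖k / z‖ = ‖k‖ / S := by rw [norm_div, hz]
    calc ‖G z‖ = ‖c‖ * ‖(1 + k / z) ^ (1 / 2 : ℂ) - 1 - (k / z) / 2‖ := by
          simp only [hG]; rw [norm_mul]
      _ ≤ ‖c‖ * (‖k / z‖ ^ 2 / 2) := by
          exact mul_le_mul_of_nonneg_left hb (norm_nonneg c)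
      _ = ‖c‖ * ‖k‖ ^ 2 / 2 / S ^ 2 := by
          rw [hnorm, div_pow]; ring
  have hGconst : ∀ S : ℝ, R ≤ S → circleIntegral G 0 S = circleIntegral G 0 R := by
    intro S hS
    refine Complex.circleIntegral_eq_of_differentiable_on_annulus_off_countable hR0 hS
      Set.countable_empty ?_ ?_
    · intro z hz
      have hzR : R ≤ ‖z‖ := by
        have := hz.2
        rw [mem_ball, dist_zero_right] at this
        linarith [not_lt.1 this]
      exact (hdiffG z (by linarith)).continuousAt.continuousWithinAt
    · intro z hz
      have hzR : R ≤ ‖z‖ := by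
        have := hz.1.2
        rw [mem_closedBall, dist_zero_right] at this
        linarith [not_le.1 (by simpa using this)]
      exact hdiffG z (by linarith)
  have hGzero : circleIntegral G 0 R = 0 := by
    by_contra hne
    have hIpos : 0 < ‖circleIntegral G 0 R‖ := norm_pos_iff.2 hne
    set I := circleIntegral G 0 R with hI
    set A : ℝ := 2 * Real.pi * (‖c‖ * ‖k‖ ^ 2 / 2) with hA
    have hAnn : 0 ≤ A := by positivity
    set S : ℝ := max R (A / ‖I‖ + 1) with hSdef
    have hS1 : R ≤ S := le_max_left _ _
    have hS2 : A / ‖I‖ + 1 ≤ S := le_max_right _ _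
    have hSpos : 0 < S := lt_of_lt_of_le hR0 hS1
    have hb : ‖I‖ ≤ A / S := by
      have h1 := circleIntegral.norm_integral_le_of_norm_le_const (C := ‖c‖ * ‖k‖ ^ 2 / 2 / S ^ 2)
        hSpos.le (hGbound S hS1)
      rw [hGconst S hS1] at h1
      calc ‖I‖ ≤ 2 * Real.pi * S * (‖c‖ * ‖k‖ ^ 2 / 2 / S ^ 2) := h1
        _ = A / S := by rw [hA]; field_simp
    have hcontra : A / S < ‖I‖ := by
      rw [div_lt_iff₀ hSpos]
      have : ‖I‖ * S ≥ ‖I‖ * (A / ‖I‖ + 1) := by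
        apply mul_le_mul_of_nonneg_left hS2 hIpos.le
      have hne0 : ‖I‖ ≠ 0 := ne_of_gt hIpos
      have heq2 : ‖I‖ * (A / ‖I‖ + 1) = A + ‖I‖ := by
        rw [mul_add, mul_one, mul_comm ‖I‖ (A / ‖I‖), div_mul_cancel₀ A hne0]
      nlinarith
    linarith
  -- integrability
  have hcontG : ContinuousOn G (sphere (0 : ℂ) R) := fun z hz =>
    (hdiffG z (hsphere_big z hz)).continuousAt.continuousWithinAt
  have hintG : CircleIntegrable G 0 R := hcontG.circleIntegrable hR0.le
  have hcontH : ContinuousOn H (sphere (0 : ℂ) R) := by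
    apply ContinuousOn.add continuousOn_const
    apply ContinuousOn.mul continuousOn_const
    intro z hz
    exact (continuousAt_inv₀ (hbig z (hsphere_big z hz)).1).continuousWithinAt
  have hintH : CircleIntegrable H 0 R := hcontH.circleIntegrable hR0.le
  have hintF : CircleIntegrable F 0 R := hcontF.circleIntegrable hR0.le
  -- split the integral
  have hsplit : circleIntegral F 0 R = circleIntegral G 0 R + circleIntegral H 0 R := by
    have h : circleIntegral G 0 R = circleIntegral F 0 R - circleIntegral H 0 R := by
      rw [← circleIntegral.integral_sub hintF hintH]
      apply circleIntegral.integral_congr hR0.le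
      intro z hz
      have hz0 : z ≠ 0 := (hbig z (hsphere_big z hz)).1
      simp only [hF, hG, hH]
      field_simp
      ring
    rw [h]; ring
  -- integral of H
  have hHval : circleIntegral H 0 R = c * k / 2 * (2 * Real.pi * Complex.I) := by
    have h2 : circleIntegral (fun _ : ℂ => c) 0 R = 0 := by
      apply Complex.circleIntegral_eq_zero_of_differentiable_on_off_countable hR0.le
        Set.countable_empty continuousOn_const
      intro z _
      exact differentiableAt_const _
    have h3 : circleIntegral (fun z : ℂ => c * k / 2 * z⁻¹) 0 R
        = c * k / 2 * (2 * Real.pi * Complex.I) := by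
      rw [circleIntegral.integral_const_mul]
      have h4 : circleIntegral (fun z : ℂ => z⁻¹) 0 R = 2 * Real.pi * Complex.I := by
        have := circleIntegral.integral_sub_inv_of_mem_ball
          (c := (0:ℂ)) (w := (0:ℂ)) (R := R) (by simpa using hR0)
        simpa using this
      rw [h4]
    have h1 : circleIntegral (fun z : ℂ => c * k / 2 * z⁻¹) 0 R
        = circleIntegral H 0 R - circleIntegral (fun _ : ℂ => c) 0 R := by
      rw [← circleIntegral.integral_sub hintH (circleIntegrable_const c 0 R)]
      apply circleIntegral.integral_congr hR0.le
      intro z hz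
      simp only [hH]
      ring
    rw [h2, sub_zero] at h1
    rw [← h1, h3]
  -- put everything together
  have hfinal : circleIntegral (fun z : ℂ => c * (1 + e ^ 2 / (E * z)) ^ (1 / 2 : ℂ)) 0 R
      = c * k / 2 * (2 * Real.pi * Complex.I) := by
    rw [circleIntegral.integral_congr hR0.le heq, hsplit, hGzero, hHval, zero_add]
  rw [hfinal]
  have hkey : c * k * c = 2 * e ^ 2 := by
    rw [hkdef]
    field_simp
    linear_combination e ^ 2 * hc2
  rw [eq_div_iff hcne]
  linear_combination (Real.pi : ℂ) * Complex.I * hkey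
end

section
/- Let E, λ ∈ ℝ with 0 < λ ≤ E, and set r₋ = √(E - √(E^2 - λ^2)) and r₊ = √(E + √(E^2 - λ^2)). Then ∫_{r₋}^{r₊} √(2E - r^2 - λ^2/r^2) dr = (π/2)(E - λ). -/
/-!
The turning points satisfy `r₋² + r₊² = 2E` and `r₋ r₊ = λ`, so on `[r₋, r₊]` the integrand is
`√((r₊² - r²)(r² - r₋²)) / r`. This has an elementary primitive, a square root plus two arcsines;
the square root vanishes at both turning points while each arcsine runs from `∓π/2` to `±π/2`,
leaving `(π/4)(r₊ - r₋)² = (π/2)(E - λ)`.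
-/

open Real Set intervalIntegral

lemma HasDerivAt.arcsin_of_one_sub_sq_eq {f : ℝ → ℝ} {f' w x : ℝ} (hf : HasDerivAt f f' x)
    (hw : 0 < w) (h : 1 - f x ^ 2 = w ^ 2) :
    HasDerivAt (fun y => arcsin (f y)) (f' / w) x := by
  have hfx : f x ^ 2 < 1 := by nlinarith
  have hne_neg : f x ≠ -1 := fun h' => by rw [h'] at hfx; norm_num at hfx
  have hne_one : f x ≠ 1 := fun h' => by rw [h'] at hfx; norm_num at hfx
  have := (hasDerivAt_arcsin hne_neg hne_one).comp x hf
  rwa [h, sqrt_sq hw.le, one_div_mul_eq_div] at this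

-- With `u = r²` the integrand becomes `√((q² - u)(u - p²)) / (2u)`, and this is its classical
-- primitive written back in `r`.
noncomputable def radialActionPrimitive (p q r : ℝ) : ℝ :=
  √((q ^ 2 - r ^ 2) * (r ^ 2 - p ^ 2)) / 2
    + (p ^ 2 + q ^ 2) / 4 * arcsin ((2 * r ^ 2 - p ^ 2 - q ^ 2) / (q ^ 2 - p ^ 2))
    + p * q / 2 * arcsin ((2 * p ^ 2 * q ^ 2 - (p ^ 2 + q ^ 2) * r ^ 2) / ((q ^ 2 - p ^ 2) * r ^ 2))

section

variable {p q : ℝ}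

lemma sqrt_radial_eq_sqrt_mul_div {r : ℝ} (hr : 0 < r) :
    √(p ^ 2 + q ^ 2 - r ^ 2 - (p * q) ^ 2 / r ^ 2) = √((q ^ 2 - r ^ 2) * (r ^ 2 - p ^ 2)) / r := by
  have hsplit : p ^ 2 + q ^ 2 - r ^ 2 - (p * q) ^ 2 / r ^ 2
      = (q ^ 2 - r ^ 2) * (r ^ 2 - p ^ 2) / r ^ 2 := by
    field_simp
    ring
  rw [hsplit, sqrt_div' _ (sq_nonneg r), sqrt_sq hr.le]

lemma hasDerivAt_radialActionPrimitive (hp : 0 < p) {r : ℝ} (hr : r ∈ Ioo p q) :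
    HasDerivAt (radialActionPrimitive p q) (√(p ^ 2 + q ^ 2 - r ^ 2 - (p * q) ^ 2 / r ^ 2)) r := by
  obtain ⟨hpr, hrq⟩ := hr
  have hr0 : 0 < r := hp.trans hpr
  have hq0 : 0 < q := hr0.trans hrq
  have hlo : p ^ 2 < r ^ 2 := pow_lt_pow_left₀ hpr hp.le two_ne_zero
  have hhi : r ^ 2 < q ^ 2 := pow_lt_pow_left₀ hrq hr0.le two_ne_zero
  have hD : 0 < q ^ 2 - p ^ 2 := by linarith
  set s := √((q ^ 2 - r ^ 2) * (r ^ 2 - p ^ 2))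
  have hprod : 0 < (q ^ 2 - r ^ 2) * (r ^ 2 - p ^ 2) := mul_pos (by linarith) (by linarith)
  have hs : 0 < s := sqrt_pos.2 hprod
  have hs2 : s ^ 2 = (q ^ 2 - r ^ 2) * (r ^ 2 - p ^ 2) := sq_sqrt hprod.le
  have hsqrt : HasDerivAt (fun x => √((q ^ 2 - x ^ 2) * (x ^ 2 - p ^ 2)))
      (2 * r * (p ^ 2 + q ^ 2 - 2 * r ^ 2) / (2 * s)) r := by
    have hpoly : HasDerivAt (fun x => (q ^ 2 - x ^ 2) * (x ^ 2 - p ^ 2))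
        (2 * r * (p ^ 2 + q ^ 2 - 2 * r ^ 2)) r := by
      refine (((hasDerivAt_pow 2 r).const_sub (q ^ 2)).mul
        ((hasDerivAt_pow 2 r).sub_const (p ^ 2))).congr_deriv ?_
      push_cast
      ring
    exact hpoly.sqrt hprod.ne'
  have hasin₁ : HasDerivAt (fun x => arcsin ((2 * x ^ 2 - p ^ 2 - q ^ 2) / (q ^ 2 - p ^ 2)))
      (4 * r / (q ^ 2 - p ^ 2) / (2 * s / (q ^ 2 - p ^ 2))) r := by
    refine HasDerivAt.arcsin_of_one_sub_sq_eq ?_ (by positivity) ?_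
    · refine ((((hasDerivAt_pow 2 r).const_mul 2).sub_const (p ^ 2)).sub_const (q ^ 2)
        |>.div_const (q ^ 2 - p ^ 2)).congr_deriv ?_
      push_cast
      ring
    · field_simp
      linear_combination (-4) * hs2
  have hasin₂ : HasDerivAt
      (fun x => arcsin ((2 * p ^ 2 * q ^ 2 - (p ^ 2 + q ^ 2) * x ^ 2) / ((q ^ 2 - p ^ 2) * x ^ 2)))
      (-4 * p ^ 2 * q ^ 2 / ((q ^ 2 - p ^ 2) * r ^ 3) /
        (2 * p * q * s / ((q ^ 2 - p ^ 2) * r ^ 2))) r := by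
    refine HasDerivAt.arcsin_of_one_sub_sq_eq ?_ (by positivity) ?_
    · refine ((((hasDerivAt_pow 2 r).const_mul (p ^ 2 + q ^ 2)).const_sub
        (2 * p ^ 2 * q ^ 2)).div ((hasDerivAt_pow 2 r).const_mul (q ^ 2 - p ^ 2))
          (by positivity)).congr_deriv ?_
      push_cast
      field_simp
      ring
    · field_simp
      linear_combination (-4 * p ^ 2 * q ^ 2) * hs2
  refine (((hsqrt.div_const 2).add (hasin₁.const_mul _)).add (hasin₂.const_mul _)).congr_deriv ?_
  rw [sqrt_radial_eq_sqrt_mul_div hr0]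
  field_simp
  linear_combination (-4) * hs2

lemma continuousOn_radialActionPrimitive (hp : 0 < p) (hpq : p < q) :
    ContinuousOn (radialActionPrimitive p q) (Icc p q) := by
  have hne : ∀ r ∈ Icc p q, (q ^ 2 - p ^ 2) * r ^ 2 ≠ 0 := fun r hr =>
    mul_ne_zero (sub_pos.2 (pow_lt_pow_left₀ hpq hp.le two_ne_zero)).ne'
      (pow_ne_zero 2 (hp.trans_le hr.1).ne')
  refine ((Continuous.continuousOn ?_).add (Continuous.continuousOn ?_)).add
    (continuousOn_const.mul (continuous_arcsin.comp_continuousOn ?_))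
  · fun_prop
  · exact continuous_const.mul (continuous_arcsin.comp (by fun_prop))
  · fun_prop (disch := exact hne)

lemma radialActionPrimitive_sub (hp : 0 < p) (hpq : p < q) :
    radialActionPrimitive p q q - radialActionPrimitive p q p = π / 4 * (q - p) ^ 2 := by
  have hD : q ^ 2 - p ^ 2 ≠ 0 := (sub_pos.2 (pow_lt_pow_left₀ hpq hp.le two_ne_zero)).ne'
  have hq : q ≠ 0 := (hp.trans hpq).ne'
  have h₁ : (2 * q ^ 2 - p ^ 2 - q ^ 2) / (q ^ 2 - p ^ 2) = 1 := by
    rw [div_eq_one_iff_eq hD]; ring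
  have h₂ : (2 * p ^ 2 - p ^ 2 - q ^ 2) / (q ^ 2 - p ^ 2) = -1 := by
    rw [div_eq_iff hD]; ring
  have h₃ : (2 * p ^ 2 * q ^ 2 - (p ^ 2 + q ^ 2) * q ^ 2) / ((q ^ 2 - p ^ 2) * q ^ 2) = -1 := by
    rw [div_eq_iff (by positivity)]; ring
  have h₄ : (2 * p ^ 2 * q ^ 2 - (p ^ 2 + q ^ 2) * p ^ 2) / ((q ^ 2 - p ^ 2) * p ^ 2) = 1 := by
    rw [div_eq_one_iff_eq (by positivity)]; ring
  simp only [radialActionPrimitive, h₁, h₂, h₃, h₄, sub_self, zero_mul, mul_zero, sqrt_zero,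
    arcsin_one, arcsin_neg_one]
  ring

theorem integral_sqrt_radial (hp : 0 < p) (hpq : p ≤ q) :
    ∫ r in p..q, √(p ^ 2 + q ^ 2 - r ^ 2 - (p * q) ^ 2 / r ^ 2) = π / 4 * (q - p) ^ 2 := by
  rcases hpq.eq_or_lt with rfl | hpq
  · simp
  rw [integral_eq_sub_of_hasDerivAt_of_le hpq.le (continuousOn_radialActionPrimitive hp hpq)
    (fun r hr => hasDerivAt_radialActionPrimitive hp hr), radialActionPrimitive_sub hp hpq]
  refine ContinuousOn.intervalIntegrable ?_
  rw [uIcc_of_le hpq.le]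
  have hne : ∀ r ∈ Icc p q, r ^ 2 ≠ 0 := fun r hr => pow_ne_zero 2 (hp.trans_le hr.1).ne'
  fun_prop (disch := assumption)

end

section

variable {E lam : ℝ}

lemma sqrt_sq_sub_sq_le (hlam : 0 ≤ lam) (hE : lam ≤ E) : √(E ^ 2 - lam ^ 2) ≤ E :=
  sqrt_le_iff.2 ⟨hlam.trans hE, by nlinarith⟩

lemma sq_sqrt_sub_add_sq_sqrt_add (hlam : 0 ≤ lam) (hE : lam ≤ E) :
    √(E - √(E ^ 2 - lam ^ 2)) ^ 2 + √(E + √(E ^ 2 - lam ^ 2)) ^ 2 = 2 * E := by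
  have hc := sqrt_sq_sub_sq_le hlam hE
  rw [sq_sqrt (by linarith), sq_sqrt (by linarith [sqrt_nonneg (E ^ 2 - lam ^ 2)])]
  ring

lemma sqrt_sub_mul_sqrt_add (hlam : 0 ≤ lam) (hE : lam ≤ E) :
    √(E - √(E ^ 2 - lam ^ 2)) * √(E + √(E ^ 2 - lam ^ 2)) = lam := by
  have hc := sqrt_sq_sub_sq_le hlam hE
  set c := √(E ^ 2 - lam ^ 2)
  have hc2 : c ^ 2 = E ^ 2 - lam ^ 2 := sq_sqrt (by nlinarith)
  rw [← sqrt_mul (by linarith), show (E - c) * (E + c) = lam ^ 2 by linear_combination -hc2,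
    sqrt_sq hlam]

end

/-- The leading (Langer-corrected) WKB action integral for the radial 3D harmonic
oscillator: for `0 < λ ≤ E`, with turning points `r∓ = √(E ∓ √(E² - λ²))`,
`∫_{r₋}^{r₊} √(2E - r² - λ²/r²) dr = (π/2)(E - λ)`. -/
theorem oscillator_action_integral (E lam : ℝ) (hlam : 0 < lam) (hE : lam ≤ E)
    (rm rp : ℝ)
    (hrm : rm = Real.sqrt (E - Real.sqrt (E ^ 2 - lam ^ 2)))
    (hrp : rp = Real.sqrt (E + Real.sqrt (E ^ 2 - lam ^ 2))) :
    ∫ r in rm..rp, Real.sqrt (2 * E - r ^ 2 - lam ^ 2 / r ^ 2) =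
      Real.pi / 2 * (E - lam) := by
  have hsum : rm ^ 2 + rp ^ 2 = 2 * E := hrm ▸ hrp ▸ sq_sqrt_sub_add_sq_sqrt_add hlam.le hE
  have hprod : rm * rp = lam := hrm ▸ hrp ▸ sqrt_sub_mul_sqrt_add hlam.le hE
  have hrm_pos : 0 < rm := pos_of_mul_pos_left (hprod ▸ hlam) (hrp ▸ sqrt_nonneg _)
  have hle : rm ≤ rp := hrm ▸ hrp ▸ sqrt_le_sqrt (by linarith [sqrt_nonneg (E ^ 2 - lam ^ 2)])
  rw [← hsum, ← hprod, integral_sqrt_radial hrm_pos hle]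
  linear_combination (π / 4) * hsum
end

section
/- Let E, e, λ ∈ ℝ with E < 0, e ≠ 0, and 0 < λ ≤ e^2/√(-2E), and set r∓ = (e^2 ∓ √(e^4 + 2Eλ^2))/(-2E). Then ∫_{r₋}^{r₊} √(2E + 2e^2/r - λ^2/r^2) dr = π ( e^2/√(-2E) - λ ). -/
/-!
By Vieta's formulas for the turning points, the radicand factors as
`-2E (r - r₋)(r₊ - r) / r²`, so the action is `√(-2E) ∫_{r₋}^{r₊} √((r - r₋)(r₊ - r)) / r dr`.
For `0 < a ≤ b` the integral `∫_a^b √((x - a)(b - x)) / x dx` has the elementary primitive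
`√((x - a)(b - x)) + (a + b)/2 · arcsin v(x) - √(ab) · arcsin u(x)`, where both `v` and `u`
increase from `-1` to `1` on `[a, b]`; hence it equals `π ((a + b)/2 - √(ab))`, the gap between the
arithmetic and geometric means of the endpoints. With `r₋ + r₊ = e²/(-E)` and
`r₋ r₊ = λ²/(-2E)` this is the claimed `π (e²/√(-2E) - λ)`.
-/

open Real Set

lemma HasDerivAt.arcsin_of_sq_add_sq {f : ℝ → ℝ} {f' s x : ℝ} (hf : HasDerivAt f f' x)
    (hs : 0 < s) (h : f x ^ 2 + s ^ 2 = 1) :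
    HasDerivAt (fun y => arcsin (f y)) (f' / s) x := by
  have h₁ : f x ≠ -1 := by rintro hx; rw [hx] at h; nlinarith
  have h₂ : f x ≠ 1 := by rintro hx; rw [hx] at h; nlinarith
  have hcos : √(1 - f x ^ 2) = s := by rw [← h, add_sub_cancel_left, sqrt_sq hs.le]
  have := (hasDerivAt_arcsin h₁ h₂).comp x hf
  rwa [hcos, one_div_mul_eq_div] at this

section

variable {a b x : ℝ}

lemma hasDerivAt_sqrt_mul_sub (hx : x ∈ Ioo a b) :
    HasDerivAt (fun y => √((y - a) * (b - y)))
      ((a + b - 2 * x) / (2 * √((x - a) * (b - x)))) x := by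
  have hQ : 0 < (x - a) * (b - x) := mul_pos (sub_pos.2 hx.1) (sub_pos.2 hx.2)
  have hpoly : HasDerivAt (fun y => (y - a) * (b - y)) (a + b - 2 * x) x :=
    (((hasDerivAt_id' x).sub_const a).mul ((hasDerivAt_id' x).const_sub b)).congr_deriv (by ring)
  exact hpoly.sqrt hQ.ne'

lemma hasDerivAt_arcsin_affine (hx : x ∈ Ioo a b) :
    HasDerivAt (fun y => arcsin ((2 * y - (a + b)) / (b - a)))
      (1 / √((x - a) * (b - x))) x := by
  have hba : 0 < b - a := by linarith [hx.1, hx.2]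
  have hQ : 0 < (x - a) * (b - x) := mul_pos (sub_pos.2 hx.1) (sub_pos.2 hx.2)
  have hs : 0 < 2 * √((x - a) * (b - x)) / (b - a) := by positivity
  have hlin : HasDerivAt (fun y => (2 * y - (a + b)) / (b - a)) (2 / (b - a)) x := by
    simpa using (((hasDerivAt_id x).const_mul 2).sub_const (a + b)).div_const (b - a)
  convert hlin.arcsin_of_sq_add_sq hs ?_ using 1
  · field_simp
  · field_simp
    linear_combination 4 * sq_sqrt hQ.le

lemma hasDerivAt_arcsin_moebius (ha : 0 < a) (hx : x ∈ Ioo a b) :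
    HasDerivAt (fun y => arcsin (((a + b) * y - 2 * (a * b)) / ((b - a) * y)))
      (√(a * b) / (x * √((x - a) * (b - x)))) x := by
  have hx0 : 0 < x := ha.trans hx.1
  have hb : 0 < b := hx0.trans hx.2
  have hba : 0 < b - a := by linarith [hx.1, hx.2]
  have hQ : 0 < (x - a) * (b - x) := mul_pos (sub_pos.2 hx.1) (sub_pos.2 hx.2)
  have hq := sq_sqrt hQ.le
  have hp := sq_sqrt (mul_pos ha hb).le
  have hs : 0 < 2 * √(a * b) * √((x - a) * (b - x)) / ((b - a) * x) := by positivity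
  have hrat : HasDerivAt (fun y => ((a + b) * y - 2 * (a * b)) / ((b - a) * y))
      (2 * (a * b) / ((b - a) * x ^ 2)) x := by
    refine ((((hasDerivAt_id' x).const_mul (a + b)).sub_const (2 * (a * b))).div
      ((hasDerivAt_id' x).const_mul (b - a)) (by positivity)).congr_deriv ?_
    field_simp
    ring
  convert hrat.arcsin_of_sq_add_sq hs ?_ using 1
  · field_simp
    exact hp
  · field_simp
    linear_combination 4 * √((x - a) * (b - x)) ^ 2 * hp + 4 * a * b * hq

noncomputable def sqrtMulSubDivPrimitive (a b x : ℝ) : ℝ :=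
  √((x - a) * (b - x)) + (a + b) / 2 * arcsin ((2 * x - (a + b)) / (b - a))
    - √(a * b) * arcsin (((a + b) * x - 2 * (a * b)) / ((b - a) * x))

lemma hasDerivAt_sqrtMulSubDivPrimitive (ha : 0 < a) (hx : x ∈ Ioo a b) :
    HasDerivAt (sqrtMulSubDivPrimitive a b) (√((x - a) * (b - x)) / x) x := by
  have hx0 : 0 < x := ha.trans hx.1
  have hb : 0 < b := hx0.trans hx.2
  have hQ : 0 < (x - a) * (b - x) := mul_pos (sub_pos.2 hx.1) (sub_pos.2 hx.2)
  refine (((hasDerivAt_sqrt_mul_sub hx).add ((hasDerivAt_arcsin_affine hx).const_mul _)).sub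
    ((hasDerivAt_arcsin_moebius ha hx).const_mul _)).congr_deriv ?_
  have hq : 0 < √((x - a) * (b - x)) := sqrt_pos.2 hQ
  field_simp
  linear_combination (-2) * sq_sqrt (mul_pos ha hb).le - 2 * sq_sqrt hQ.le

lemma continuousOn_sqrtMulSubDivPrimitive (ha : 0 < a) (hab : a < b) :
    ContinuousOn (sqrtMulSubDivPrimitive a b) (Icc a b) := by
  have hden : ∀ x ∈ Icc a b, (b - a) * x ≠ 0 := fun x hx =>
    mul_ne_zero (sub_pos.2 hab).ne' (ha.trans_le hx.1).ne'
  unfold sqrtMulSubDivPrimitive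
  refine ((continuous_sqrt.comp_continuousOn (by fun_prop)).add
    (continuousOn_const.mul (continuous_arcsin.comp_continuousOn (by fun_prop)))).sub
    (continuousOn_const.mul (continuous_arcsin.comp_continuousOn ?_))
  exact ContinuousOn.div (by fun_prop) (by fun_prop) hden

lemma sqrtMulSubDivPrimitive_left (ha : 0 < a) (hab : a < b) :
    sqrtMulSubDivPrimitive a b a = -(π / 2) * ((a + b) / 2 - √(a * b)) := by
  have hva : (2 * a - (a + b)) / (b - a) = -1 := by
    field_simp [(sub_pos.2 hab).ne']; ring
  have hua : ((a + b) * a - 2 * (a * b)) / ((b - a) * a) = -1 := by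
    field_simp [(sub_pos.2 hab).ne', ha.ne']; ring
  simp only [sqrtMulSubDivPrimitive, hva, hua, arcsin_neg_one, sub_self, zero_mul, sqrt_zero]
  ring

lemma sqrtMulSubDivPrimitive_right (ha : 0 < a) (hab : a < b) :
    sqrtMulSubDivPrimitive a b b = π / 2 * ((a + b) / 2 - √(a * b)) := by
  have hvb : (2 * b - (a + b)) / (b - a) = 1 := by
    field_simp [(sub_pos.2 hab).ne']; ring
  have hub : ((a + b) * b - 2 * (a * b)) / ((b - a) * b) = 1 := by
    field_simp [(sub_pos.2 hab).ne', (ha.trans hab).ne']; ring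
  simp only [sqrtMulSubDivPrimitive, hvb, hub, arcsin_one, sub_self, mul_zero, sqrt_zero]
  ring

end

theorem integral_sqrt_mul_sub_div_self {a b : ℝ} (ha : 0 < a) (hab : a ≤ b) :
    ∫ x in a..b, √((x - a) * (b - x)) / x = π * ((a + b) / 2 - √(a * b)) := by
  obtain rfl | hab := hab.eq_or_lt
  · rw [intervalIntegral.integral_same, ← sq, sqrt_sq ha.le]
    ring
  have hint : IntervalIntegrable (fun x => √((x - a) * (b - x)) / x) MeasureTheory.volume a b :=
    (ContinuousOn.div (by fun_prop) continuousOn_id fun x hx =>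
      (ha.trans_le (uIcc_of_le hab.le ▸ hx).1).ne').intervalIntegrable
  rw [intervalIntegral.integral_eq_sub_of_hasDerivAt_of_le hab.le
    (continuousOn_sqrtMulSubDivPrimitive ha hab)
    (fun x hx => hasDerivAt_sqrtMulSubDivPrimitive ha hx) hint,
    sqrtMulSubDivPrimitive_left ha hab, sqrtMulSubDivPrimitive_right ha hab]
  ring

lemma quadratic_roots_sum_prod {c k l D : ℝ} (hc : c ≠ 0) (hD : D ^ 2 = k ^ 2 - c * l ^ 2) :
    c * ((k - D) / c + (k + D) / c) = 2 * k ∧ c * ((k - D) / c * ((k + D) / c)) = l ^ 2 := by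
  constructor
  · field_simp; ring
  · field_simp; linear_combination -hD

lemma coulomb_discriminant_bounds {E e lam : ℝ} (hE : E < 0) (he : e ≠ 0) (hlam : 0 < lam)
    (hlam' : lam ≤ e ^ 2 / √(-2 * E)) :
    0 ≤ e ^ 4 + 2 * E * lam ^ 2 ∧ √(e ^ 4 + 2 * E * lam ^ 2) < e ^ 2 := by
  have hE2 : 0 < -2 * E := by linarith
  have hsq := pow_le_pow_left₀ (by positivity) ((le_div_iff₀ (sqrt_pos.2 hE2)).1 hlam') 2
  rw [mul_pow, sq_sqrt hE2.le] at hsq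
  refine ⟨by linarith, (sqrt_lt' (by positivity)).2 ?_⟩
  nlinarith [mul_pos hE2 (pow_pos hlam 2)]

lemma sqrt_coulomb_radicand {E e lam rm rp r : ℝ} (hE : E ≤ 0)
    (hsum : -2 * E * (rm + rp) = 2 * e ^ 2) (hprod : -2 * E * (rm * rp) = lam ^ 2) (hr : 0 < r) :
    √(2 * E + 2 * e ^ 2 / r - lam ^ 2 / r ^ 2) = √(-2 * E) * (√((r - rm) * (rp - r)) / r) := by
  have hfactor : 2 * E + 2 * e ^ 2 / r - lam ^ 2 / r ^ 2
      = -2 * E * ((r - rm) * (rp - r)) / r ^ 2 := by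
    field_simp
    linear_combination hprod - r * hsum
  rw [hfactor, sqrt_div' _ (sq_nonneg r), sqrt_sq hr.le, sqrt_mul (by linarith), mul_div_assoc]

lemma coulomb_action_of_vieta {E e lam rm rp : ℝ} (hE : E < 0) (hlam : 0 ≤ lam)
    (hsum : -2 * E * (rm + rp) = 2 * e ^ 2) (hprod : -2 * E * (rm * rp) = lam ^ 2) :
    √(-2 * E) * (π * ((rm + rp) / 2 - √(rm * rp))) = π * (e ^ 2 / √(-2 * E) - lam) := by
  have hE2 : 0 < -2 * E := by linarith
  have ht : 0 < √(-2 * E) := sqrt_pos.2 hE2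
  have ht2 : √(-2 * E) ^ 2 = -2 * E := sq_sqrt hE2.le
  have hmean : (rm + rp) / 2 = e ^ 2 / √(-2 * E) ^ 2 := by
    rw [ht2, eq_div_iff hE2.ne']
    linear_combination hsum / 2
  have hgeom : √(rm * rp) = lam / √(-2 * E) := by
    rw [← sqrt_sq (by positivity : 0 ≤ lam / √(-2 * E)), div_pow, ht2]
    congr 1
    rw [eq_div_iff hE2.ne']
    linear_combination hprod
  rw [hmean, hgeom]
  generalize √(-2 * E) = t at ht ⊢
  field_simp

/-- The leading (Langer-corrected) WKB action integral for the radial Coulomb problem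
`V(r) = -e²/r`: for `E < 0`, `e ≠ 0`, `0 < λ ≤ e²/√(-2E)`, with turning points
`r∓ = (e² ∓ √(e⁴ + 2Eλ²))/(-2E)`,
`∫_{r₋}^{r₊} √(2E + 2e²/r - λ²/r²) dr = π(e²/√(-2E) - λ)`. -/
theorem coulomb_action_integral (E e lam : ℝ) (hE : E < 0) (he : e ≠ 0)
    (hlam : 0 < lam) (hlam' : lam ≤ e ^ 2 / Real.sqrt (-2 * E))
    (rm rp : ℝ)
    (hrm : rm = (e ^ 2 - Real.sqrt (e ^ 4 + 2 * E * lam ^ 2)) / (-2 * E))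
    (hrp : rp = (e ^ 2 + Real.sqrt (e ^ 4 + 2 * E * lam ^ 2)) / (-2 * E)) :
    ∫ r in rm..rp, Real.sqrt (2 * E + 2 * e ^ 2 / r - lam ^ 2 / r ^ 2) =
      Real.pi * (e ^ 2 / Real.sqrt (-2 * E) - lam) := by
  have hE2 : 0 < -2 * E := by linarith
  obtain ⟨hdisc, hsqrt_lt⟩ := coulomb_discriminant_bounds hE he hlam hlam'
  obtain ⟨hsum, hprod⟩ : -2 * E * (rm + rp) = 2 * e ^ 2 ∧ -2 * E * (rm * rp) = lam ^ 2 := by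
    subst hrm hrp
    exact quadratic_roots_sum_prod hE2.ne' (by rw [sq_sqrt hdisc]; ring)
  have hrm_pos : 0 < rm := hrm ▸ div_pos (by linarith) hE2
  have hle : rm ≤ rp := by
    rw [hrm, hrp]
    gcongr
    linarith [sqrt_nonneg (e ^ 4 + 2 * E * lam ^ 2)]
  calc _ = ∫ r in rm..rp, √(-2 * E) * (√((r - rm) * (rp - r)) / r) :=
        intervalIntegral.integral_congr fun r hr =>
          sqrt_coulomb_radicand hE.le hsum hprod (hrm_pos.trans_le (uIcc_of_le hle ▸ hr).1)
    _ = √(-2 * E) * (π * ((rm + rp) / 2 - √(rm * rp))) := by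
        rw [intervalIntegral.integral_const_mul, integral_sqrt_mul_sub_div_self hrm_pos hle]
    _ = π * (e ^ 2 / √(-2 * E) - lam) := coulomb_action_of_vieta hE hlam.le hsum hprod
end

section
/- Let ħ > 0, l ∈ ℕ, n ∈ ℕ, set λ = ħ(l + 1/2), and let E ∈ ℝ with E ≥ λ. Set r₋ = √(E - √(E^2 - λ^2)) and r₊ = √(E + √(E^2 - λ^2)). Then (1/ħ) ∫_{r₋}^{r₊} √(2E - r^2 - λ^2/r^2) dr = π (n + 1/2) if and only if E = ħ (2n + l + 3/2). -/
/-!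
Put `s = √(E² - λ²)`. Then `2E r² - r⁴ - λ² = s² - (r² - E)²`, and the integrand has the
elementary primitive
`½ (√(2E r² - r⁴ - λ²) + E arcsin ((r² - E) / s) + λ arcsin ((λ² - E r²) / (s r²)))`.
Between the turning points `r₋² = E - s` and `r₊² = E + s` the square root vanishes at both ends
while the two arcsine arguments run from `-1` to `1` and from `1` to `-1`, so the action
integral is `π (E - λ) / 2`, and the quantization condition becomes a linear equation in `E`.
-/

open Real Set

theorem HasDerivAt.arcsin {f : ℝ → ℝ} {f' x : ℝ} (hf : HasDerivAt f f' x)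
    (h : f x ^ 2 < 1) :
    HasDerivAt (fun y => arcsin (f y)) (f' / √(1 - f x ^ 2)) x := by
  rw [sq_lt_one_iff_abs_lt_one, abs_lt] at h
  simpa [Function.comp_def, div_eq_inv_mul] using (hasDerivAt_arcsin h.1.ne' h.2.ne).comp x hf

theorem Real.sqrt_one_sub_div_sq {x d : ℝ} (hd : 0 < d) :
    √(1 - (x / d) ^ 2) = √(d ^ 2 - x ^ 2) / d := by
  rw [← sqrt_sq hd.le, ← sqrt_div' _ (sq_nonneg d), sqrt_sq hd.le]
  congr 1
  field_simp

namespace RadialOscillator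

variable {lam E s : ℝ}

theorem radicand_eq_sq_sub_sq (hs : s ^ 2 = E ^ 2 - lam ^ 2) (r : ℝ) :
    2 * E * r ^ 2 - r ^ 4 - lam ^ 2 = s ^ 2 - (r ^ 2 - E) ^ 2 := by
  linear_combination -hs

theorem sq_sub_sq_eq_sq_mul_radicand (hs : s ^ 2 = E ^ 2 - lam ^ 2) (r : ℝ) :
    (s * r ^ 2) ^ 2 - (lam ^ 2 - E * r ^ 2) ^ 2 =
      lam ^ 2 * (2 * E * r ^ 2 - r ^ 4 - lam ^ 2) := by
  linear_combination r ^ 4 * hs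

noncomputable def actionPrimitive (lam E s r : ℝ) : ℝ :=
  (√(2 * E * r ^ 2 - r ^ 4 - lam ^ 2) + E * arcsin ((r ^ 2 - E) / s)
    + lam * arcsin ((lam ^ 2 - E * r ^ 2) / (s * r ^ 2))) / 2

theorem continuousOn_actionPrimitive (hs : s ≠ 0) :
    ContinuousOn (actionPrimitive lam E s) (Ioi 0) := by
  unfold actionPrimitive
  fun_prop (disch := intro r hr; simp_all [ne_of_gt])

theorem hasDerivAt_actionPrimitive {r : ℝ} (hs0 : 0 < s) (hs : s ^ 2 = E ^ 2 - lam ^ 2)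
    (hlam : 0 < lam) (hr : 0 < r) (hP : 0 < 2 * E * r ^ 2 - r ^ 4 - lam ^ 2) :
    HasDerivAt (actionPrimitive lam E s) √(2 * E - r ^ 2 - lam ^ 2 / r ^ 2) r := by
  set P := 2 * E * r ^ 2 - r ^ 4 - lam ^ 2 with hP_def
  have hsr : 0 < s * r ^ 2 := by positivity
  have hinner₁ : √(1 - ((r ^ 2 - E) / s) ^ 2) = √P / s := by
    rw [sqrt_one_sub_div_sq hs0, ← radicand_eq_sq_sub_sq hs]
  have hinner₂ :
      √(1 - ((lam ^ 2 - E * r ^ 2) / (s * r ^ 2)) ^ 2) = lam * √P / (s * r ^ 2) := by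
    rw [sqrt_one_sub_div_sq hsr, sq_sub_sq_eq_sq_mul_radicand hs, sqrt_mul (sq_nonneg _),
      sqrt_sq hlam.le]
  have hlt₁ : ((r ^ 2 - E) / s) ^ 2 < 1 := by
    rw [div_pow, div_lt_one (by positivity)]; nlinarith [radicand_eq_sq_sub_sq hs r]
  have hlt₂ : ((lam ^ 2 - E * r ^ 2) / (s * r ^ 2)) ^ 2 < 1 := by
    rw [div_pow, div_lt_one (by positivity)]
    nlinarith [sq_sub_sq_eq_sq_mul_radicand hs r, mul_pos (pow_pos hlam 2) hP]
  have hintegrand : √(2 * E - r ^ 2 - lam ^ 2 / r ^ 2) = √P / r := by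
    rw [← sqrt_sq hr.le, ← sqrt_div' _ (sq_nonneg r), sqrt_sq hr.le, hP_def]
    congr 1
    field_simp
  have hpoly : HasDerivAt (fun y => 2 * E * y ^ 2 - y ^ 4 - lam ^ 2) (4 * E * r - 4 * r ^ 3) r :=
    ((((hasDerivAt_pow 2 r).const_mul (2 * E)).sub (hasDerivAt_pow 4 r)).sub_const
      (lam ^ 2)).congr_deriv (by ring)
  have hquot₁ : HasDerivAt (fun y => (y ^ 2 - E) / s) (2 * r / s) r :=
    (((hasDerivAt_pow 2 r).sub_const E).div_const s).congr_deriv (by ring)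
  have hquot₂ : HasDerivAt (fun y => (lam ^ 2 - E * y ^ 2) / (s * y ^ 2))
      (-2 * lam ^ 2 / (s * r ^ 3)) r :=
    ((((hasDerivAt_pow 2 r).const_mul E).const_sub (lam ^ 2)).div
      ((hasDerivAt_pow 2 r).const_mul s) hsr.ne').congr_deriv (by field_simp; ring)
  refine ((((hpoly.sqrt hP.ne').add ((hquot₁.arcsin hlt₁).const_mul E)).add
    ((hquot₂.arcsin hlt₂).const_mul lam)).div_const 2).congr_deriv ?_
  rw [hinner₁, hinner₂, hintegrand]
  have hq : √P ^ 2 = P := sq_sqrt hP.le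
  have hq0 : 0 < √P := sqrt_pos.2 hP
  generalize √P = q at hq hq0 ⊢
  field_simp
  linear_combination -4 * hq

theorem actionPrimitive_of_sq_eq_add (hs0 : 0 < s) (hs : s ^ 2 = E ^ 2 - lam ^ 2)
    (hEs : 0 < E + s) {r : ℝ} (hr : r ^ 2 = E + s) :
    actionPrimitive lam E s r = π * (E - lam) / 4 := by
  have hP : 2 * E * r ^ 2 - r ^ 4 - lam ^ 2 = 0 := by
    rw [radicand_eq_sq_sub_sq hs, hr]; ring
  have harg₁ : (r ^ 2 - E) / s = 1 := by rw [hr, add_sub_cancel_left, div_self hs0.ne']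
  have harg₂ : (lam ^ 2 - E * r ^ 2) / (s * r ^ 2) = -1 := by
    rw [hr, div_eq_iff (by positivity)]; linear_combination hs
  rw [actionPrimitive, hP, harg₁, harg₂, sqrt_zero, arcsin_one, arcsin_neg_one]
  ring

theorem actionPrimitive_of_sq_eq_sub (hs0 : 0 < s) (hs : s ^ 2 = E ^ 2 - lam ^ 2)
    (hEs : 0 < E - s) {r : ℝ} (hr : r ^ 2 = E - s) :
    actionPrimitive lam E s r = -(π * (E - lam) / 4) := by
  have hP : 2 * E * r ^ 2 - r ^ 4 - lam ^ 2 = 0 := by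
    rw [radicand_eq_sq_sub_sq hs, hr]; ring
  have harg₁ : (r ^ 2 - E) / s = -1 := by rw [hr, div_eq_iff hs0.ne']; ring
  have harg₂ : (lam ^ 2 - E * r ^ 2) / (s * r ^ 2) = 1 := by
    rw [hr, div_eq_iff (by positivity)]; linear_combination hs
  rw [actionPrimitive, hP, harg₁, harg₂, sqrt_zero, arcsin_one, arcsin_neg_one]
  ring

theorem integral_sqrt_radial_eq (hlam : 0 < lam) (hE : lam ≤ E) :
    ∫ r in √(E - √(E ^ 2 - lam ^ 2))..√(E + √(E ^ 2 - lam ^ 2)),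
      √(2 * E - r ^ 2 - lam ^ 2 / r ^ 2) = π * (E - lam) / 2 := by
  rcases hE.eq_or_lt with rfl | hlt
  · simp
  set s := √(E ^ 2 - lam ^ 2)
  have hs : s ^ 2 = E ^ 2 - lam ^ 2 := sq_sqrt (by nlinarith)
  have hs0 : 0 < s := sqrt_pos.2 (by nlinarith)
  have hsE : s < E := by nlinarith
  have hrm : 0 < √(E - s) := sqrt_pos.2 (by linarith)
  have hrmp : √(E - s) ≤ √(E + s) := sqrt_le_sqrt (by linarith)
  have hcont : ContinuousOn (fun r => √(2 * E - r ^ 2 - lam ^ 2 / r ^ 2)) (Ioi 0) := by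
    fun_prop (disch := intro r hr; simp_all [ne_of_gt])
  rw [intervalIntegral.integral_eq_sub_of_hasDerivAt_of_le hrmp
      (continuousOn_actionPrimitive hs0.ne' |>.mono fun r hr => hrm.trans_le hr.1)
      (fun r hr => ?deriv)
      (hcont.mono (fun r hr => ?pos)).intervalIntegrable,
    actionPrimitive_of_sq_eq_add hs0 hs (by linarith) (sq_sqrt (by linarith)),
    actionPrimitive_of_sq_eq_sub hs0 hs (by linarith) (sq_sqrt (by linarith))]
  · ring
  case pos =>
    rw [uIcc_of_le hrmp] at hr
    exact hrm.trans_le hr.1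
  case deriv =>
    have hr0 : 0 < r := hrm.trans hr.1
    have hlo : E - s < r ^ 2 := (sqrt_lt' hr0).1 hr.1
    have hhi : r ^ 2 < E + s := (lt_sqrt hr0.le).1 hr.2
    refine hasDerivAt_actionPrimitive hs0 hs hlam hr0 ?_
    rw [radicand_eq_sq_sub_sq hs]
    nlinarith

end RadialOscillator

/-- Exact-WKB (Bohr–Sommerfeld with Maslov phases) quantization for the radial 3D
harmonic oscillator `V(r) = r²/2` with angular momentum `l`: for `hbar > 0`,
`λ = hbar(l + 1/2)`, `E ≥ λ`, and turning points `r∓ = √(E ∓ √(E² - λ²))`, the condition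
`(1/hbar) ∫_{r₋}^{r₊} √(2E - r² - λ²/r²) dr = π(n + 1/2)` holds if and only if
`E = hbar(2n + l + 3/2)`. -/
theorem oscillator_quantization (hbar : ℝ) (hhbar : 0 < hbar) (l n : ℕ) (lam E rm rp : ℝ)
    (hlam : lam = hbar * (l + 1 / 2)) (hE : lam ≤ E)
    (hrm : rm = Real.sqrt (E - Real.sqrt (E ^ 2 - lam ^ 2)))
    (hrp : rp = Real.sqrt (E + Real.sqrt (E ^ 2 - lam ^ 2))) :
    (1 / hbar) * ∫ r in rm..rp, Real.sqrt (2 * E - r ^ 2 - lam ^ 2 / r ^ 2) =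
        Real.pi * (n + 1 / 2) ↔
      E = hbar * (2 * n + l + 3 / 2) := by
  have hlam0 : 0 < lam := by rw [hlam]; positivity
  have hgap : 1 / hbar * (π * (E - lam) / 2) - π * (n + 1 / 2) =
      π / (2 * hbar) * (E - hbar * (2 * n + l + 3 / 2)) := by
    rw [hlam]; field_simp; ring
  rw [hrm, hrp, RadialOscillator.integral_sqrt_radial_eq hlam0 hE, ← sub_eq_zero, hgap,
    mul_eq_zero_iff_left (by positivity), sub_eq_zero]
end

section
/- Let ħ > 0, e ≠ 0 real, l ∈ ℕ, n ∈ ℕ with n ≥ l + 1, and set α = e^2/(ħ^2 n) and E = - e^4/(2 ħ^2 n^2). Then there exists a real polynomial p with natDegree p = n - l - 1 and p(0) ≠ 0 such that the function u(r) = r^{l+1} · p(r) · exp(-α r) satisfies, for every r > 0, the radial Coulomb Schrödinger equation -(ħ^2/2) u''(r) + ( -e^2/r + ħ^2 l(l+1)/(2 r^2) ) u(r) = E u(r); in particular u(r)/r^{l+1} tends to p(0) ≠ 0 as r → 0⁺, so u behaves as the Frobenius solution u(r) ~ r^{l+1} at the regular singular point r = 0. -/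
/-!
Let `u(r) = r^(l+1) p(r) exp(-α r)`. Since `e² = α ħ² n` and `E = -ħ² α² / 2`, the radial
equation multiplied by `-2 r² exp(α r) / ħ²` becomes `r^(l+2)` times Kummer's equation
`r p'' + (2l + 2 - 2α r) p' + 2α (n - l - 1) p = 0`. Because `n - l - 1` is a natural number, the
Kummer series solving it terminates: its coefficients obey a two-term recurrence whose factor
`n - l - 1 - j` vanishes exactly at `j = n - l - 1`. This gives a polynomial of exactly that degree
with constant term `1`.
-/

open Polynomial Filter Topology

/-- Kummer's operator `z w'' + (b - z) w' + κ w` in the variable `z = a X`, multiplied by `a`. -/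
noncomputable def kummerOp {R : Type*} [CommRing R] (a b κ : R) (p : R[X]) : R[X] :=
  X * derivative (derivative p) + C b * derivative p - C a * (X * derivative p) + C (a * κ) * p

noncomputable def kummerCoeff (a b : ℝ) (k : ℕ) : ℕ → ℝ
  | 0 => 1
  | j + 1 => -a * ((k : ℝ) - j) / (((j : ℝ) + 1) * ((j : ℝ) + b)) * kummerCoeff a b k j

section Kummer

variable {a b : ℝ} {k : ℕ}

theorem kummerCoeff_succ_recurrence (hb : 0 < b) (j : ℕ) :
    ((j : ℝ) + 1) * ((j : ℝ) + b) * kummerCoeff a b k (j + 1)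
      = -a * ((k : ℝ) - j) * kummerCoeff a b k j := by
  have : ((j : ℝ) + 1) * ((j : ℝ) + b) ≠ 0 := by positivity
  rw [kummerCoeff]
  field_simp

theorem kummerCoeff_eq_zero_of_lt {j : ℕ} (hj : k < j) : kummerCoeff a b k j = 0 := by
  induction j with
  | zero => omega
  | succ j ih =>
    rw [kummerCoeff]
    rcases (Nat.lt_succ_iff.mp hj).lt_or_eq with hkj | rfl
    · rw [ih hkj, mul_zero]
    · simp

theorem kummerCoeff_ne_zero (ha : a ≠ 0) (hb : 0 < b) {j : ℕ} (hj : j ≤ k) :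
    kummerCoeff a b k j ≠ 0 := by
  induction j with
  | zero => simp [kummerCoeff]
  | succ j ih =>
    have hjk : (j : ℝ) < k := by exact_mod_cast hj
    rw [kummerCoeff]
    refine mul_ne_zero (div_ne_zero ?_ (by positivity)) (ih (by omega))
    exact mul_ne_zero (neg_ne_zero.mpr ha) (sub_ne_zero.mpr hjk.ne')

/-- The terminating Kummer series `M(-k, b, a X)`, normalized to constant term `1`. -/
noncomputable def kummerPoly (a b : ℝ) (k : ℕ) : ℝ[X] :=
  ∑ j ∈ Finset.range (k + 1), C (kummerCoeff a b k j) * X ^ j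

theorem kummerPoly_coeff (m : ℕ) : (kummerPoly a b k).coeff m = kummerCoeff a b k m := by
  simp only [kummerPoly, finsetSum_coeff, coeff_C_mul_X_pow, Finset.sum_ite_eq, Finset.mem_range]
  split_ifs with hm
  · rfl
  · exact (kummerCoeff_eq_zero_of_lt (by omega)).symm

theorem kummerPoly_eval_zero : (kummerPoly a b k).eval 0 = 1 := by
  rw [← coeff_zero_eq_eval_zero, kummerPoly_coeff, kummerCoeff]

theorem kummerPoly_natDegree (ha : a ≠ 0) (hb : 0 < b) : (kummerPoly a b k).natDegree = k :=
  natDegree_eq_of_le_of_coeff_ne_zero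
    (natDegree_le_iff_coeff_eq_zero.mpr fun _ hm =>
      (kummerPoly_coeff _).trans (kummerCoeff_eq_zero_of_lt hm))
    ((kummerPoly_coeff _).trans_ne (kummerCoeff_ne_zero ha hb le_rfl))

theorem kummerOp_kummerPoly (hb : 0 < b) : kummerOp a b k (kummerPoly a b k) = 0 := by
  ext m
  have hrec := kummerCoeff_succ_recurrence (a := a) (k := k) hb m
  cases m <;>
  · simp only [kummerOp, coeff_add, coeff_sub, coeff_C_mul, coeff_X_mul, coeff_derivative,
      kummerPoly_coeff, mul_coeff_zero, coeff_X_zero, coeff_C_zero, coeff_zero] at hrec ⊢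
    push_cast at hrec ⊢
    linear_combination hrec

end Kummer

theorem Polynomial.X_mul_derivative_X_pow {R : Type*} [CommSemiring R] (m : ℕ) :
    X * derivative (X ^ m : R[X]) = C (m : R) * X ^ m := by
  cases m with
  | zero => simp
  | succ m => simp only [derivative_X_pow_succ, Nat.cast_succ]; ring

theorem X_sq_mul_radial_eq_X_pow_mul_kummerOp {R : Type*} [CommRing R] (a : R) (l k : ℕ)
    (p : R[X]) :
    X ^ 2 * (derivative (derivative (X ^ (l + 1) * p)) - C a * derivative (X ^ (l + 1) * p))
      + (C (a * (k + l + 1)) * X - C ((l : R) * (l + 1))) * (X ^ (l + 1) * p)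
      = X ^ (l + 2) * kummerOp a (2 * l + 2) k p := by
  have h := X_mul_derivative_X_pow (R := R) l
  simp only [kummerOp, derivative_mul, derivative_X_pow_succ, derivative_natCast, derivative_one,
    map_add, map_mul, map_natCast, map_one, map_ofNat, zero_mul, add_zero] at h ⊢
  linear_combination (X * (l + 1 : R[X]) * p) * h

theorem Polynomial.deriv_eval_mul_exp (Q : ℝ[X]) (α : ℝ) :
    deriv (fun x => Q.eval x * Real.exp (-α * x))
      = fun x => (derivative Q - C α * Q).eval x * Real.exp (-α * x) := by
  funext x
  have hexp : HasDerivAt (fun x => Real.exp (-α * x)) (Real.exp (-α * x) * -α) x := by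
    simpa using ((hasDerivAt_id x).const_mul (-α)).exp
  refine ((Q.hasDerivAt x).mul hexp).deriv.trans ?_
  simp only [eval_sub, eval_mul, eval_C]
  ring

theorem coulomb_radial_eq_of_kummerOp {hbar e α E : ℝ} {l k : ℕ} {p : ℝ[X]}
    (hp : kummerOp (2 * α) (2 * l + 2) k p = 0) (he : e ^ 2 = α * hbar ^ 2 * (k + l + 1))
    (hE : E = -(hbar ^ 2 * α ^ 2) / 2) {r : ℝ} (hr : r ≠ 0) :
    -(hbar ^ 2 / 2) *
        deriv (deriv (fun r : ℝ => r ^ (l + 1) * p.eval r * Real.exp (-α * r))) r +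
      (-e ^ 2 / r + hbar ^ 2 * l * (l + 1) / (2 * r ^ 2)) *
        (r ^ (l + 1) * p.eval r * Real.exp (-α * r)) =
      E * (r ^ (l + 1) * p.eval r * Real.exp (-α * r)) := by
  obtain ⟨Q, hQ⟩ : ∃ Q : ℝ[X], Q = X ^ (l + 1) * p := ⟨_, rfl⟩
  have hu : (fun r : ℝ => r ^ (l + 1) * p.eval r * Real.exp (-α * r))
      = fun r => Q.eval r * Real.exp (-α * r) := by
    simp only [hQ, eval_mul, eval_pow, eval_X]
  have key := congrArg (eval r) (X_sq_mul_radial_eq_X_pow_mul_kummerOp (2 * α) l k p)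
  rw [← hQ, hp, mul_zero] at key
  have hQr : Q.eval r = r ^ (l + 1) * p.eval r := by simp only [hQ, eval_mul, eval_pow, eval_X]
  rw [hu, deriv_eval_mul_exp, deriv_eval_mul_exp, he, hE, ← hQr]
  simp only [derivative_sub, derivative_mul, derivative_C, zero_mul,
    zero_add, eval_sub, eval_add, eval_mul, eval_C, eval_X, eval_pow, eval_zero] at key ⊢
  field_simp
  linear_combination -(hbar ^ 2) * key

theorem tendsto_pow_mul_div_pow_nhdsGT {f : ℝ → ℝ} (hf : ContinuousAt f 0) (m : ℕ) :
    Tendsto (fun r => r ^ m * f r / r ^ m) (𝓝[>] 0) (𝓝 (f 0)) :=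
  (hf.tendsto.mono_left nhdsWithin_le_nhds).congr' <| eventually_mem_nhdsWithin.mono
    fun _ hr => (mul_div_cancel_left₀ _ (pow_ne_zero _ (ne_of_gt hr))).symm

/-- Bound-state eigenfunction of the radial Coulomb problem and its Frobenius behavior
at the origin: for `hbar > 0`, `e ≠ 0`, `l, n ∈ ℕ` with `n ≥ l + 1`,
`α = e²/(hbar² n)` and `E = -e⁴/(2hbar² n²)`, there is a real polynomial `p` with
`natDegree p = n - l - 1` and `p(0) ≠ 0` such that
`u(r) = r^(l+1) p(r) exp(-αr)` solves
`-(hbar²/2) u'' + (-e²/r + hbar² l(l+1)/(2r²)) u = E u` for all `r > 0`, and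
`u(r)/r^(l+1) → p(0) ≠ 0` as `r → 0⁺`. -/
theorem coulomb_bound_state (hbar e : ℝ) (hhbar : 0 < hbar) (he : e ≠ 0)
    (l n : ℕ) (hn : l + 1 ≤ n) (α E : ℝ)
    (hα : α = e ^ 2 / (hbar ^ 2 * n)) (hE : E = -e ^ 4 / (2 * hbar ^ 2 * n ^ 2)) :
    ∃ p : Polynomial ℝ, p.natDegree = n - l - 1 ∧ p.eval 0 ≠ 0 ∧
      (∀ r : ℝ, 0 < r →
        -(hbar ^ 2 / 2) *
            deriv (deriv (fun r : ℝ => r ^ (l + 1) * p.eval r * Real.exp (-α * r))) r +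
          (-e ^ 2 / r + hbar ^ 2 * l * (l + 1) / (2 * r ^ 2)) *
            (r ^ (l + 1) * p.eval r * Real.exp (-α * r)) =
          E * (r ^ (l + 1) * p.eval r * Real.exp (-α * r))) ∧
      Filter.Tendsto
        (fun r : ℝ => (r ^ (l + 1) * p.eval r * Real.exp (-α * r)) / r ^ (l + 1))
        (nhdsWithin 0 (Set.Ioi 0)) (nhds (p.eval 0)) := by
  obtain ⟨k, rfl⟩ : ∃ k, n = k + l + 1 := ⟨n - l - 1, by omega⟩
  have hα0 : α ≠ 0 := by rw [hα]; positivity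
  refine ⟨kummerPoly (2 * α) (2 * l + 2) k, ?_, ?_, fun r hr => ?_, ?_⟩
  · rw [kummerPoly_natDegree (mul_ne_zero two_ne_zero hα0) (by positivity)]
    omega
  · rw [kummerPoly_eval_zero]
    exact one_ne_zero
  · refine coulomb_radial_eq_of_kummerOp (kummerOp_kummerPoly (by positivity)) ?_ ?_ hr.ne'
    · rw [hα]
      push_cast
      field_simp
    · rw [hE, hα]
      push_cast
      field_simp
  · simpa only [mul_assoc, mul_zero, Real.exp_zero, mul_one] using
      tendsto_pow_mul_div_pow_nhdsGT
        (f := fun r => (kummerPoly (2 * α) (2 * l + 2) k).eval r * Real.exp (-α * r))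
        (by fun_prop) (l + 1)
end

section
/- Let ħ > 0, l ∈ ℕ, m ∈ ℕ, and set E = ħ (2m + l + 3/2). Then there exists a real polynomial q with natDegree q = m and q(0) ≠ 0 such that the function u(r) = r^{l+1} · q(r^2) · exp(-r^2/(2ħ)) satisfies, for every r > 0, the radial harmonic-oscillator Schrödinger equation -(ħ^2/2) u''(r) + ( r^2/2 + ħ^2 l(l+1)/(2 r^2) ) u(r) = E u(r); in particular u(r)/r^{l+1} tends to q(0) ≠ 0 as r → 0⁺, so u behaves as the Frobenius solution u(r) ~ r^{l+1} at the regular singular point r = 0. -/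
/-!
Writing `u(r) = r^(l+1) q(r²) exp(-r²/(2ħ))`, every derivative of a function
`r^k p(r²) exp(-r²/(2ħ))` (with `k ∈ ℤ`, at `r ≠ 0`) is again of this form, so the radial
equation becomes a polynomial identity in `s = r²`: the scaled associated Laguerre equation
`ħ s q'' + (ħ(l + 3/2) - s) q' + m q = 0`. Its power-series solution obeys a two-term recursion
whose factor `k - m` makes it terminate at degree `m`.
-/

open Polynomial Filter Topology

noncomputable def laguerreCoeff (hbar b : ℝ) (m : ℕ) : ℕ → ℝ
  | 0 => 1
  | k + 1 => (k - m) / (hbar * (k + 1) * (k + b)) * laguerreCoeff hbar b m k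

/-- `laguerrePoly hbar (α + 1) m` is the associated Laguerre polynomial `L_m^(α)(X / hbar)`,
normalised to take the value `1` at `0`. -/
noncomputable def laguerrePoly (hbar b : ℝ) (m : ℕ) : ℝ[X] :=
  ∑ k ∈ Finset.range (m + 1), monomial k (laguerreCoeff hbar b m k)

section Laguerre

variable {hbar b : ℝ} {m : ℕ}

theorem laguerreCoeff_eq_zero_of_lt {n : ℕ} (h : m < n) : laguerreCoeff hbar b m n = 0 := by
  induction n with
  | zero => omega
  | succ k ih =>
    rcases Nat.lt_succ_iff_lt_or_eq.mp h with h | rfl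
    · rw [laguerreCoeff, ih (by omega), mul_zero]
    · simp [laguerreCoeff]

theorem laguerreCoeff_ne_zero (hh : hbar ≠ 0) (hb : 0 < b) {n : ℕ} (h : n ≤ m) :
    laguerreCoeff hbar b m n ≠ 0 := by
  induction n with
  | zero => simp [laguerreCoeff]
  | succ k ih =>
    have hkm : (k : ℝ) - m ≠ 0 := sub_ne_zero.mpr (by exact_mod_cast (by omega : k ≠ m))
    rw [laguerreCoeff]
    exact mul_ne_zero (div_ne_zero hkm (by positivity)) (ih (by omega))

theorem mul_laguerreCoeff_succ (hh : hbar ≠ 0) (hb : 0 < b) (k : ℕ) :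
    hbar * (k + 1) * (k + b) * laguerreCoeff hbar b m (k + 1) =
      (k - m) * laguerreCoeff hbar b m k := by
  have : hbar * (k + 1) * (k + b) ≠ 0 := by positivity
  rw [laguerreCoeff]
  field_simp

theorem coeff_laguerrePoly (n : ℕ) :
    (laguerrePoly hbar b m).coeff n = laguerreCoeff hbar b m n := by
  rw [laguerrePoly, finsetSum_coeff]
  simp only [coeff_monomial, Finset.sum_ite_eq', Finset.mem_range]
  split_ifs with h
  · rfl
  · exact (laguerreCoeff_eq_zero_of_lt (by omega)).symm

theorem natDegree_laguerrePoly (hh : hbar ≠ 0) (hb : 0 < b) :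
    (laguerrePoly hbar b m).natDegree = m :=
  natDegree_eq_of_le_of_coeff_ne_zero
    (natDegree_le_iff_coeff_eq_zero.mpr fun _ hn => by
      rw [coeff_laguerrePoly]; exact laguerreCoeff_eq_zero_of_lt (mod_cast hn))
    (by rw [coeff_laguerrePoly]; exact laguerreCoeff_ne_zero hh hb le_rfl)

theorem eval_zero_laguerrePoly : (laguerrePoly hbar b m).eval 0 = 1 := by
  rw [← coeff_zero_eq_eval_zero, coeff_laguerrePoly, laguerreCoeff]

theorem laguerrePoly_ode (hh : hbar ≠ 0) (hb : 0 < b) :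
    C hbar * X * derivative (derivative (laguerrePoly hbar b m))
      + (C (hbar * b) - X) * derivative (laguerrePoly hbar b m)
      + C (m : ℝ) * laguerrePoly hbar b m = 0 := by
  ext n
  have h := mul_laguerreCoeff_succ (m := m) hh hb n
  rcases n with _ | n
  · simp only [coeff_add, coeff_sub, mul_assoc, mul_coeff_zero, coeff_C_zero, coeff_X_zero,
      coeff_derivative, coeff_laguerrePoly, coeff_zero]
    push_cast at h ⊢
    linear_combination h
  · simp only [coeff_add, coeff_sub, mul_assoc, coeff_C_mul, coeff_X_mul, sub_mul,
      coeff_derivative, coeff_laguerrePoly, coeff_zero]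
    push_cast at h ⊢
    linear_combination h

end Laguerre

noncomputable def radialGauss (hbar : ℝ) (k : ℤ) (p : ℝ[X]) (r : ℝ) : ℝ :=
  r ^ k * p.eval (r ^ 2) * Real.exp (-r ^ 2 / (2 * hbar))

noncomputable def radialGaussDerivPoly (hbar : ℝ) (k : ℤ) (p : ℝ[X]) : ℝ[X] :=
  C (k : ℝ) * p + 2 * X * derivative p - C hbar⁻¹ * X * p

section Radial

variable (hbar : ℝ) (k : ℤ) (p : ℝ[X]) {r : ℝ}

theorem hasDerivAt_radialGauss (hr : r ≠ 0) :
    HasDerivAt (radialGauss hbar k p)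
      (radialGauss hbar (k - 1) (radialGaussDerivPoly hbar k p) r) r := by
  have hpow := hasDerivAt_zpow k r (.inl hr)
  have hpoly := (p.hasDerivAt (r ^ 2)).comp r (hasDerivAt_pow 2 r)
  have hexp := (((hasDerivAt_pow 2 r).neg).div_const (2 * hbar)).exp
  refine ((hpow.mul hpoly).mul hexp).congr_deriv ?_
  have hk : r ^ k = r ^ (k - 1) * r := by rw [zpow_sub_one₀ hr, inv_mul_cancel_right₀ hr]
  simp only [radialGauss, radialGaussDerivPoly, eval_add, eval_sub, eval_mul, eval_C, eval_X,
    eval_ofNat, Function.comp_apply, Pi.neg_apply, Pi.mul_apply, hk]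
  ring

theorem deriv_deriv_radialGauss (hr : r ≠ 0) :
    deriv (deriv (radialGauss hbar k p)) r =
      radialGauss hbar (k - 1 - 1)
        (radialGaussDerivPoly hbar (k - 1) (radialGaussDerivPoly hbar k p)) r := by
  have hderiv : deriv (radialGauss hbar k p) =ᶠ[𝓝 r]
      radialGauss hbar (k - 1) (radialGaussDerivPoly hbar k p) :=
    mem_of_superset (isOpen_ne.mem_nhds hr) fun s hs => (hasDerivAt_radialGauss hbar k p hs).deriv
  rw [hderiv.deriv_eq, (hasDerivAt_radialGauss hbar (k - 1) _ hr).deriv]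

end Radial

theorem radialGauss_schrodinger {hbar : ℝ} (hh : hbar ≠ 0) (l m : ℕ) {q : ℝ[X]}
    (hq : C hbar * X * derivative (derivative q) + (C (hbar * (l + 3 / 2)) - X) * derivative q
      + C (m : ℝ) * q = 0) {r : ℝ} (hr : r ≠ 0) :
    -(hbar ^ 2 / 2) * deriv (deriv (radialGauss hbar (l + 1) q)) r
      + (r ^ 2 / 2 + hbar ^ 2 * l * (l + 1) / (2 * r ^ 2)) * radialGauss hbar (l + 1) q r
      = hbar * (2 * m + l + 3 / 2) * radialGauss hbar (l + 1) q r := by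
  have hode := congrArg (eval (r ^ 2)) hq
  simp only [eval_add, eval_sub, eval_mul, eval_C, eval_X, eval_zero] at hode
  have hpow : r ^ ((l : ℤ) + 1) = r ^ ((l : ℤ) + 1 - 1 - 1) * r ^ 2 := by
    rw [← zpow_natCast, ← zpow_add₀ hr]; push_cast; ring_nf
  rw [deriv_deriv_radialGauss hbar _ _ hr]
  simp only [radialGauss, radialGaussDerivPoly, hpow, eval_add, eval_sub, eval_mul, eval_C, eval_X,
    eval_ofNat, eval_zero, eval_one, derivative_add, derivative_sub, derivative_mul, derivative_C,
    derivative_X, derivative_ofNat]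
  push_cast
  field_simp
  -- once the common factor `r ^ (l - 1) * exp (-r² / (2ħ))` is cancelled, the defect is a
  -- multiple of the Laguerre equation at `s = r²`
  linear_combination (-4 * hbar * r ^ 2) * hode

theorem tendsto_pow_mul_div_pow_nhdsNE_zero (k : ℕ) {f : ℝ → ℝ} (hf : ContinuousAt f 0) :
    Tendsto (fun r => r ^ k * f r / r ^ k) (𝓝[≠] 0) (𝓝 (f 0)) := by
  refine (hf.tendsto.mono_left nhdsWithin_le_nhds).congr' ?_
  filter_upwards [self_mem_nhdsWithin] with r hr
  rw [mul_div_cancel_left₀ _ (pow_ne_zero k hr)]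

/-- Bound-state eigenfunction of the radial 3D harmonic oscillator and its Frobenius
behavior at the origin: for `hbar > 0`, `l, m ∈ ℕ`, and `E = hbar(2m + l + 3/2)`,
there is a real polynomial `q` with `natDegree q = m` and `q(0) ≠ 0` such that
`u(r) = r^(l+1) q(r²) exp(-r²/(2hbar))` solves
`-(hbar²/2) u'' + (r²/2 + hbar² l(l+1)/(2r²)) u = E u` for all `r > 0`, and
`u(r)/r^(l+1) → q(0) ≠ 0` as `r → 0⁺`. -/
theorem oscillator_bound_state (hbar : ℝ) (hhbar : 0 < hbar) (l m : ℕ) (E : ℝ)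
    (hE : E = hbar * (2 * m + l + 3 / 2)) :
    ∃ q : Polynomial ℝ, q.natDegree = m ∧ q.eval 0 ≠ 0 ∧
      (∀ r : ℝ, 0 < r →
        -(hbar ^ 2 / 2) *
            deriv (deriv (fun r : ℝ =>
              r ^ (l + 1) * q.eval (r ^ 2) * Real.exp (-r ^ 2 / (2 * hbar)))) r +
          (r ^ 2 / 2 + hbar ^ 2 * l * (l + 1) / (2 * r ^ 2)) *
            (r ^ (l + 1) * q.eval (r ^ 2) * Real.exp (-r ^ 2 / (2 * hbar))) =
          E * (r ^ (l + 1) * q.eval (r ^ 2) * Real.exp (-r ^ 2 / (2 * hbar)))) ∧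
      Filter.Tendsto
        (fun r : ℝ =>
          (r ^ (l + 1) * q.eval (r ^ 2) * Real.exp (-r ^ 2 / (2 * hbar))) / r ^ (l + 1))
        (nhdsWithin 0 (Set.Ioi 0)) (nhds (q.eval 0)) := by
  have hb : (0 : ℝ) < l + 3 / 2 := by positivity
  set q := laguerrePoly hbar (l + 3 / 2) m
  have hu (r : ℝ) :
      r ^ (l + 1) * q.eval (r ^ 2) * Real.exp (-r ^ 2 / (2 * hbar)) =
        radialGauss hbar (l + 1) q r := by
    rw [radialGauss, ← zpow_natCast]; push_cast; rfl
  refine ⟨q, natDegree_laguerrePoly hhbar.ne' hb, eval_zero_laguerrePoly.trans_ne one_ne_zero,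
    fun r hr => ?_, ?_⟩
  · simp only [hu, hE]
    exact radialGauss_schrodinger hhbar.ne' l m (laguerrePoly_ode hhbar.ne' hb) hr.ne'
  · have hlim := tendsto_pow_mul_div_pow_nhdsNE_zero (l + 1)
      (f := fun r => q.eval (r ^ 2) * Real.exp (-r ^ 2 / (2 * hbar))) (by fun_prop)
    simpa [mul_assoc] using hlim.mono_left (nhdsWithin_mono (s := Set.Ioi 0) _ fun _ => ne_of_gt)
end
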